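/- arXiv:1207.1705 — 7 statements merged into one kernel-verified Lean document; each statement's English description precedes it below -/
import Mathlib

section
/- If C and D are updown categories, then their product C × D, with object set Ob(C) × Ob(D), Hom((c,d),(c',d')) = Hom(c,c') × Hom(d,d'), and rank |(c,d)| = |c| + |d|, is an updown category. -/
structure UDData where
  Obj : Type
  Hom : Obj → Obj → Type
  idm : ∀ p, Hom p p
  comp : ∀ {p q r : Obj}, Hom p q → Hom q r → Hom p r
  idm_comp : ∀ {p q : Obj} (f : Hom p q), comp (idm p) f = f
  comp_idm : ∀ {p q : Obj} (f : Hom p q), comp f (idm q) = f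
  comp_assoc : ∀ {p q r s : Obj} (f : Hom p q) (g : Hom q r) (h : Hom r s),
    comp (comp f g) h = comp f (comp g h)
  rank : Obj → ℕ
  zhat : Obj

namespace UDData

def cast {C : UDData} {p q q' : C.Obj} (h : q = q') (f : C.Hom p q) : C.Hom p q' := h ▸ f

def Chain (C : UDData) : ℕ → C.Obj → C.Obj → Type
  | 0, p, q => PLift (p = q)
  | n + 1, p, q => (r : C.Obj) × C.Chain n p r × {f : C.Hom r q // C.rank q = C.rank r + 1}

structure IsUpdown (C : UDData) : Prop where
  rank_finite : ∀ n : ℕ, {p : C.Obj | C.rank p = n}.Finite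
  hom_finite : ∀ p q : C.Obj, Finite (C.Hom p q)
  rank_zhat : C.rank C.zhat = 0
  zhat_unique : ∀ p : C.Obj, C.rank p = 0 → p = C.zhat
  from_zhat : ∀ p : C.Obj, Nonempty (C.Hom C.zhat p)
  hom_rank : ∀ p q : C.Obj, Nonempty (C.Hom p q) → C.rank p < C.rank q ∨ p = q
  aut_inv : ∀ (p : C.Obj) (f : C.Hom p p),
    ∃ g : C.Hom p p, C.comp f g = C.idm p ∧ C.comp g f = C.idm p
  factor : ∀ {p q : C.Obj} (f : C.Hom p q), C.rank p < C.rank q →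
    ∃ (r : C.Obj) (g : C.Hom p r) (h : C.Hom r q),
      C.rank r = C.rank p + 1 ∧ C.comp g h = f
  pre_free : ∀ {p q : C.Obj}, C.rank q = C.rank p + 1 → ∀ (a : C.Hom p p) (f : C.Hom p q),
    C.comp a f = f → a = C.idm p
  post_free : ∀ {p q : C.Obj}, C.rank q = C.rank p + 1 → ∀ (b : C.Hom q q) (f : C.Hom p q),
    C.comp f b = f → b = C.idm q

variable (C : UDData)

noncomputable def nAut (p : C.Obj) : ℕ := Nat.card (C.Hom p p)

noncomputable def u (p q : C.Obj) : ℕ := Nat.card (C.Hom p q) / C.nAut q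

noncomputable def d (p q : C.Obj) : ℕ := Nat.card (C.Hom p q) / C.nAut p

noncomputable def uStep (p q : C.Obj) : ℕ := if C.rank q = C.rank p + 1 then C.u p q else 0

noncomputable def dStep (p q : C.Obj) : ℕ := if C.rank q = C.rank p + 1 then C.d p q else 0

open Classical in
noncomputable def uext (C : UDData) : ℕ → C.Obj → C.Obj → ℕ
  | 0, p, q => if p = q then 1 else 0
  | n + 1, p, q => ∑ᶠ r : C.Obj, C.uext n p r * C.uStep r q

open Classical in
noncomputable def dext (C : UDData) : ℕ → C.Obj → C.Obj → ℕ
  | 0, p, q => if p = q then 1 else 0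
  | n + 1, p, q => ∑ᶠ r : C.Obj, C.dext n p r * C.dStep r q

noncomputable def uE (p q : C.Obj) : ℕ := C.uext (C.rank q - C.rank p) p q

noncomputable def dE (p q : C.Obj) : ℕ := C.dext (C.rank q - C.rank p) p q

def Univalent (C : UDData) : Prop := ∀ p : C.Obj, Subsingleton (C.Hom p p)

def Simple (C : UDData) : Prop :=
  (∀ p q : C.Obj, Subsingleton (C.Hom p q)) ∧
    ∀ (n : ℕ) (p q : C.Obj), Subsingleton (C.Chain n p q)

def EUC (C : UDData) (u : ℕ → ℕ) : Prop :=
  ∀ p : C.Obj, (∑ᶠ q : C.Obj, C.uStep p q) = u (C.rank p)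

def EDC (C : UDData) (d : ℕ → ℕ) : Prop :=
  ∀ p : C.Obj, (∑ᶠ q : C.Obj, C.dStep q p) = d (C.rank p)

def Factorial (C : UDData) : Prop :=
  ∀ p : C.Obj, (∑ᶠ q : C.Obj, C.dStep q p) = C.rank p

def prod (C D : UDData) : UDData where
  Obj := C.Obj × D.Obj
  Hom := fun p q => C.Hom p.1 q.1 × D.Hom p.2 q.2
  idm := fun p => (C.idm p.1, D.idm p.2)
  comp := fun f g => (C.comp f.1 g.1, D.comp f.2 g.2)
  idm_comp := by intro p q f; cases f; simp [C.idm_comp, D.idm_comp]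
  comp_idm := by intro p q f; cases f; simp [C.comp_idm, D.comp_idm]
  comp_assoc := by intro p q r s f g h; simp [C.comp_assoc, D.comp_assoc]
  rank := fun p => C.rank p.1 + D.rank p.2
  zhat := (C.zhat, D.zhat)

structure Mor (C D : UDData) where
  obj : C.Obj → D.Obj
  map : ∀ {p q : C.Obj}, C.Hom p q → D.Hom (obj p) (obj q)
  map_idm : ∀ p : C.Obj, map (C.idm p) = D.idm (obj p)
  map_comp : ∀ {p q r : C.Obj} (f : C.Hom p q) (g : C.Hom q r),
    map (C.comp f g) = D.comp (map f) (map g)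
  rank_eq : ∀ p : C.Obj, D.rank (obj p) = C.rank p

def Mor.comp {C D E : UDData} (F : Mor C D) (G : Mor D E) : Mor C E where
  obj := fun p => G.obj (F.obj p)
  map := fun f => G.map (F.map f)
  map_idm := by intro p; show G.map (F.map (C.idm p)) = _; rw [F.map_idm, G.map_idm]
  map_comp := by
    intro p q r f g
    show G.map (F.map (C.comp f g)) = E.comp (G.map (F.map f)) (G.map (F.map g))
    rw [F.map_comp, G.map_comp]
  rank_eq := by intro p; rw [G.rank_eq, F.rank_eq]

structure Mor.IsGood {C D : UDData} (F : Mor C D) : Prop where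
  aut_inj : ∀ p : C.Obj, Function.Injective fun a : C.Hom p p => F.map a
  pre_quot_inj : ∀ {p q₁ q₂ : C.Obj} (f₁ : C.Hom p q₁) (f₂ : C.Hom p q₂),
    C.rank q₁ = C.rank p + 1 → C.rank q₂ = C.rank p + 1 →
    ∀ h : F.obj q₁ = F.obj q₂,
      (∃ a : D.Hom (F.obj p) (F.obj p),
        D.comp a (UDData.cast h (F.map f₁)) = F.map f₂) →
      ∃ e : q₁ = q₂, ∃ a : C.Hom p p, C.comp a (UDData.cast e f₁) = f₂
  post_quot_inj : ∀ {p q₁ q₂ : C.Obj} (f₁ : C.Hom p q₁) (f₂ : C.Hom p q₂),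
    C.rank q₁ = C.rank p + 1 → C.rank q₂ = C.rank p + 1 →
    ∀ h : F.obj q₁ = F.obj q₂,
      (∃ b : D.Hom (F.obj q₂) (F.obj q₂),
        D.comp (UDData.cast h (F.map f₁)) b = F.map f₂) →
      ∃ e : q₁ = q₂, ∃ b : C.Hom q₂ q₂, C.comp (UDData.cast e f₁) b = f₂

def Mor.IsCovering {C' C : UDData} (F : Mor C' C) : Prop :=
  Function.Surjective F.obj ∧
    ∀ p q : C'.Obj, C'.rank q = C'.rank p + 1 →
      Function.Bijective fun x : (q' : {q' : C'.Obj // F.obj q' = F.obj q}) × C'.Hom p q'.1 =>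
        UDData.cast x.1.2 (F.map x.2)

noncomputable def objCoeff (n : ℕ) : ℚ :=
  ∑ᶠ p : C.Obj, if C.rank p = n then ((C.nAut p : ℚ))⁻¹ else 0

noncomputable def objGF : PowerSeries ℚ := PowerSeries.mk C.objCoeff

noncomputable def morGF : PowerSeries ℚ :=
  PowerSeries.mk fun n =>
    ∑ᶠ p : C.Obj, ∑ᶠ q : C.Obj,
      if C.rank p + C.rank q = n then (C.uStep p q : ℚ) * ((C.nAut p : ℚ))⁻¹ else 0

noncomputable def sqSub (f : PowerSeries ℚ) : PowerSeries ℚ :=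
  PowerSeries.mk fun n => if 2 ∣ n then PowerSeries.coeff (R := ℚ) (n / 2) f else 0

noncomputable def coverCard (n : ℕ) : ℕ := Nat.card ((q : C.Obj) × C.Chain n C.zhat q)

noncomputable def inprod (f g : C.Obj → ℚ) : ℚ := ∑ᶠ p : C.Obj, f p * g p * C.nAut p

noncomputable def Uop (f : C.Obj → ℚ) : C.Obj → ℚ := fun q => ∑ᶠ p : C.Obj, f p * C.uStep p q

noncomputable def Dop (f : C.Obj → ℚ) : C.Obj → ℚ := fun p => ∑ᶠ q : C.Obj, f q * C.dStep p q

end UDData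

/-!
Every axiom is checked componentwise. Two axioms need an idea. A morphism of the product
raising the rank by one raises it by one in one factor and is an endomorphism, hence an
automorphism, in the other; freeness there is just cancellation in the automorphism group.
A morphism raising the rank factors through a cover in a factor whose rank goes up, with the
identity in the other factor.
-/

namespace UDData

@[simp] lemma prod_rank {C D : UDData} (p : (C.prod D).Obj) :
    (C.prod D).rank p = C.rank p.1 + D.rank p.2 :=
  rfl

namespace IsUpdown

variable {C D : UDData}

lemma finite_rank_le (hC : C.IsUpdown) (n : ℕ) : {p : C.Obj | C.rank p ≤ n}.Finite :=
  (Set.finite_Iic n).preimage' fun k _ => hC.rank_finite k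

lemma rank_le_of_hom (hC : C.IsUpdown) {p q : C.Obj} (f : C.Hom p q) : C.rank p ≤ C.rank q := by
  rcases hC.hom_rank p q ⟨f⟩ with h | rfl
  · exact h.le
  · rfl

lemma eq_idm_of_comp_eq_right (hC : C.IsUpdown) {p : C.Obj} {a f : C.Hom p p}
    (h : C.comp a f = f) : a = C.idm p := by
  obtain ⟨g, hfg, -⟩ := hC.aut_inv p f
  calc a = C.comp a (C.comp f g) := by rw [hfg, C.comp_idm]
    _ = C.comp (C.comp a f) g := (C.comp_assoc ..).symm
    _ = C.idm p := by rw [h, hfg]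

lemma eq_idm_of_comp_eq_left (hC : C.IsUpdown) {p : C.Obj} {b f : C.Hom p p}
    (h : C.comp f b = f) : b = C.idm p := by
  obtain ⟨g, -, hgf⟩ := hC.aut_inv p f
  calc b = C.comp (C.comp g f) b := by rw [hgf, C.idm_comp]
    _ = C.comp g (C.comp f b) := C.comp_assoc ..
    _ = C.idm p := by rw [h, hgf]

lemma pre_free_of_rank_le_succ (hC : C.IsUpdown) {p q : C.Obj} (hpq : C.rank q ≤ C.rank p + 1)
    {a : C.Hom p p} {f : C.Hom p q} (h : C.comp a f = f) : a = C.idm p := by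
  rcases hC.hom_rank p q ⟨f⟩ with hlt | rfl
  · exact hC.pre_free (by omega) a f h
  · exact hC.eq_idm_of_comp_eq_right h

lemma post_free_of_rank_le_succ (hC : C.IsUpdown) {p q : C.Obj} (hpq : C.rank q ≤ C.rank p + 1)
    {b : C.Hom q q} {f : C.Hom p q} (h : C.comp f b = f) : b = C.idm q := by
  rcases hC.hom_rank p q ⟨f⟩ with hlt | rfl
  · exact hC.post_free (by omega) b f h
  · exact hC.eq_idm_of_comp_eq_left h

lemma prod_rank_finite (hC : C.IsUpdown) (hD : D.IsUpdown) (n : ℕ) :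
    {p : (C.prod D).Obj | (C.prod D).rank p = n}.Finite :=
  ((hC.finite_rank_le n).prod (hD.finite_rank_le n)).subset
    fun p (hp : C.rank p.1 + D.rank p.2 = n) =>
      ⟨show C.rank p.1 ≤ n by omega, show D.rank p.2 ≤ n by omega⟩

lemma prod_hom_rank (hC : C.IsUpdown) (hD : D.IsUpdown) {p q : (C.prod D).Obj}
    (f : (C.prod D).Hom p q) : (C.prod D).rank p < (C.prod D).rank q ∨ p = q := by
  simp only [prod_rank]
  rcases hC.hom_rank _ _ ⟨f.1⟩ with h₁ | h₁
  · exact .inl (by have := hD.rank_le_of_hom f.2; omega)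
  rcases hD.hom_rank _ _ ⟨f.2⟩ with h₂ | h₂
  · exact .inl (by rw [h₁]; omega)
  · exact .inr (Prod.ext h₁ h₂)

lemma prod_factor (hC : C.IsUpdown) (hD : D.IsUpdown) {p q : (C.prod D).Obj}
    (f : (C.prod D).Hom p q) (hpq : (C.prod D).rank p < (C.prod D).rank q) :
    ∃ (r : (C.prod D).Obj) (g : (C.prod D).Hom p r) (h : (C.prod D).Hom r q),
      (C.prod D).rank r = (C.prod D).rank p + 1 ∧ (C.prod D).comp g h = f := by
  simp only [prod_rank] at hpq
  rcases lt_or_ge (C.rank p.1) (C.rank q.1) with h₁ | h₁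
  · obtain ⟨r, g, h, hr, hgh⟩ := hC.factor f.1 h₁
    exact ⟨(r, p.2), (g, D.idm p.2), (h, f.2),
      show C.rank r + D.rank p.2 = C.rank p.1 + D.rank p.2 + 1 by omega,
      Prod.ext hgh (D.idm_comp f.2)⟩
  · obtain ⟨r, g, h, hr, hgh⟩ := hD.factor f.2 (by omega)
    exact ⟨(p.1, r), (C.idm p.1, g), (f.1, h),
      show C.rank p.1 + D.rank r = C.rank p.1 + D.rank p.2 + 1 by omega,
      Prod.ext (C.idm_comp f.1) hgh⟩

lemma prod_pre_free (hC : C.IsUpdown) (hD : D.IsUpdown) {p q : (C.prod D).Obj}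
    (hpq : (C.prod D).rank q = (C.prod D).rank p + 1) (a : (C.prod D).Hom p p)
    (f : (C.prod D).Hom p q) (h : (C.prod D).comp a f = f) : a = (C.prod D).idm p := by
  obtain ⟨h₁, h₂⟩ : C.comp a.1 f.1 = f.1 ∧ D.comp a.2 f.2 = f.2 := Prod.ext_iff.mp h
  have := hC.rank_le_of_hom f.1
  have := hD.rank_le_of_hom f.2
  simp only [prod_rank] at hpq
  exact Prod.ext (hC.pre_free_of_rank_le_succ (by omega) h₁)
    (hD.pre_free_of_rank_le_succ (by omega) h₂)

lemma prod_post_free (hC : C.IsUpdown) (hD : D.IsUpdown) {p q : (C.prod D).Obj}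
    (hpq : (C.prod D).rank q = (C.prod D).rank p + 1) (b : (C.prod D).Hom q q)
    (f : (C.prod D).Hom p q) (h : (C.prod D).comp f b = f) : b = (C.prod D).idm q := by
  obtain ⟨h₁, h₂⟩ : C.comp f.1 b.1 = f.1 ∧ D.comp f.2 b.2 = f.2 := Prod.ext_iff.mp h
  have := hC.rank_le_of_hom f.1
  have := hD.rank_le_of_hom f.2
  simp only [prod_rank] at hpq
  exact Prod.ext (hC.post_free_of_rank_le_succ (by omega) h₁)
    (hD.post_free_of_rank_le_succ (by omega) h₂)

end IsUpdown

end UDData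

theorem updown_prod_isUpdown (C D : UDData) (hC : C.IsUpdown) (hD : D.IsUpdown) :
    (C.prod D).IsUpdown := by
  exact
    { rank_finite := hC.prod_rank_finite hD
      hom_finite p q :=
        have := hC.hom_finite p.1 q.1
        have := hD.hom_finite p.2 q.2
        inferInstanceAs (Finite (C.Hom p.1 q.1 × D.Hom p.2 q.2))
      rank_zhat := by
        show C.rank C.zhat + D.rank D.zhat = 0
        rw [hC.rank_zhat, hD.rank_zhat]
      zhat_unique p hp := by
        simp only [UDData.prod_rank, Nat.add_eq_zero_iff] at hp
        exact Prod.ext (hC.zhat_unique p.1 hp.1) (hD.zhat_unique p.2 hp.2)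
      from_zhat p :=
        let ⟨f₁⟩ := hC.from_zhat p.1
        let ⟨f₂⟩ := hD.from_zhat p.2
        ⟨(f₁, f₂)⟩
      hom_rank _ _ := fun ⟨f⟩ => hC.prod_hom_rank hD f
      aut_inv p f :=
        let ⟨g₁, hfg₁, hgf₁⟩ := hC.aut_inv p.1 f.1
        let ⟨g₂, hfg₂, hgf₂⟩ := hD.aut_inv p.2 f.2
        ⟨(g₁, g₂), Prod.ext hfg₁ hfg₂, Prod.ext hgf₁ hgf₂⟩
      factor := hC.prod_factor hD
      pre_free := hC.prod_pre_free hD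
      post_free := hC.prod_post_free hD }
end

section
/- In an updown category C, the up operator U and the down operator D on the free vector space k(Ob C) are adjoint with respect to the inner product defined by ⟨p,p'⟩ = |Aut(p)| if p' = p and 0 otherwise. -/
/-!
Both inner products expand to the double sum of `f p * g q` weighted by `u(p;q) |Aut q|`, resp.
`d(p;q) |Aut p|`. These weights agree: for `rank q = rank p + 1`, `Aut p` acts freely on
`Hom(p,q)` by precomposition and `Aut q` by postcomposition, so both `|Aut|`s divide `|Hom(p,q)|`,
the natural-number divisions defining `u` and `d` are exact, and both weights equal `|Hom(p,q)|`.
-/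

theorem MulAction.card_dvd_card_of_smul_eq_self {G X : Type*} [Group G] [MulAction G X]
    (hfree : ∀ (g : G) (x : X), g • x = x → g = 1) : Nat.card G ∣ Nat.card X := by
  have hstab : ∀ x : X, stabilizer G x = ⊥ := fun x =>
    (Subgroup.eq_bot_iff_forall _).mpr fun g hg => hfree g x hg
  rw [Nat.card_congr (selfEquivOrbitsQuotientProd hstab), Nat.card_prod]
  exact dvd_mul_left _ _

theorem finsum_comm_of_support_subset {α β M : Type*} [AddCommMonoid M] {F : α → β → M}
    {s : Finset α} {t : Finset β} (hF : ∀ a b, F a b ≠ 0 → a ∈ s ∧ b ∈ t) :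
    ∑ᶠ a, ∑ᶠ b, F a b = ∑ᶠ b, ∑ᶠ a, F a b := by
  have hrow : ∀ a, ∑ᶠ b, F a b = ∑ b ∈ t, F a b := fun a =>
    finsum_eq_sum_of_support_subset _ fun b hb => (hF a b hb).2
  have hcol : ∀ b, ∑ᶠ a, F a b = ∑ a ∈ s, F a b := fun b =>
    finsum_eq_sum_of_support_subset _ fun a ha => (hF a b ha).1
  simp_rw [hrow, hcol]
  rw [finsum_eq_sum_of_support_subset (s := s), finsum_eq_sum_of_support_subset (s := t),
    Finset.sum_comm]
  · intro b hb
    obtain ⟨a, -, ha⟩ := Finset.exists_ne_zero_of_sum_ne_zero hb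
    exact (hF a b ha).2
  · intro a ha
    obtain ⟨b, -, hb⟩ := Finset.exists_ne_zero_of_sum_ne_zero ha
    exact (hF a b hb).1

namespace UDData

variable {C : UDData}

noncomputable abbrev autGroup {p : C.Obj}
    (hinv : ∀ f : C.Hom p p, ∃ g, C.comp f g = C.idm p ∧ C.comp g f = C.idm p) :
    Group (C.Hom p p) where
  mul := C.comp
  one := C.idm p
  inv f := Classical.choose (hinv f)
  mul_assoc := C.comp_assoc
  one_mul := C.idm_comp
  mul_one := C.comp_idm
  inv_mul_cancel f := (Classical.choose_spec (hinv f)).2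

theorem nAut_dvd_card_hom_of_pre_free {p q : C.Obj}
    (hinv : ∀ f : C.Hom p p, ∃ g, C.comp f g = C.idm p ∧ C.comp g f = C.idm p)
    (hfree : ∀ (a : C.Hom p p) (f : C.Hom p q), C.comp a f = f → a = C.idm p) :
    C.nAut p ∣ Nat.card (C.Hom p q) :=
  let := autGroup hinv
  let : MulAction (C.Hom p p) (C.Hom p q) :=
    { smul := C.comp, one_smul := C.idm_comp, mul_smul := C.comp_assoc }
  MulAction.card_dvd_card_of_smul_eq_self hfree

theorem nAut_dvd_card_hom_of_post_free {p q : C.Obj}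
    (hinv : ∀ f : C.Hom q q, ∃ g, C.comp f g = C.idm q ∧ C.comp g f = C.idm q)
    (hfree : ∀ (b : C.Hom q q) (f : C.Hom p q), C.comp f b = f → b = C.idm q) :
    C.nAut q ∣ Nat.card (C.Hom p q) := by
  let := autGroup hinv
  let : MulAction (C.Hom q q)ᵐᵒᵖ (C.Hom p q) :=
    { smul b f := C.comp f b.unop
      one_smul := C.comp_idm
      mul_smul a b f := (C.comp_assoc f b.unop a.unop).symm }
  rw [nAut, Nat.card_congr (MulOpposite.opEquiv (α := C.Hom q q))]
  exact MulAction.card_dvd_card_of_smul_eq_self fun b f hb =>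
    MulOpposite.unop_injective (hfree b.unop f hb)

theorem IsUpdown.uStep_mul_nAut (h : C.IsUpdown) (p q : C.Obj) :
    C.uStep p q * C.nAut q = C.dStep p q * C.nAut p := by
  unfold uStep dStep u d
  split_ifs with hr
  · rw [Nat.div_mul_cancel (nAut_dvd_card_hom_of_post_free (h.aut_inv q) (h.post_free hr)),
      Nat.div_mul_cancel (nAut_dvd_card_hom_of_pre_free (h.aut_inv p) (h.pre_free hr))]
  · simp

end UDData

theorem updown_U_D_adjoint (C : UDData) (h : C.IsUpdown) (f g : C.Obj → ℚ)
    (hf : (Function.support f).Finite) (hg : (Function.support g).Finite) :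
    C.inprod (C.Uop f) g = C.inprod f (C.Dop g) := by
  calc C.inprod (C.Uop f) g
      = ∑ᶠ q, ∑ᶠ p, f p * g q * (C.uStep p q * C.nAut q : ℕ) := by
        refine finsum_congr fun q => ?_
        simp only [UDData.Uop, finsum_mul]
        exact finsum_congr fun p => by push_cast; ring
    _ = ∑ᶠ p, ∑ᶠ q, f p * g q * (C.dStep p q * C.nAut p : ℕ) := by
        simp_rw [h.uStep_mul_nAut]
        exact (finsum_comm_of_support_subset (s := hf.toFinset) (t := hg.toFinset) fun p q hpq =>
          ⟨hf.mem_toFinset.2 (left_ne_zero_of_mul (left_ne_zero_of_mul hpq)),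
            hg.mem_toFinset.2 (right_ne_zero_of_mul (left_ne_zero_of_mul hpq))⟩).symm
    _ = C.inprod f (C.Dop g) := by
        refine finsum_congr fun p => ?_
        simp only [UDData.Dop, mul_finsum, finsum_mul]
        exact finsum_congr fun q => by push_cast; ring
end

section
/- If F: C → D is a morphism of updown categories and D is univalent, then C is univalent; if D is simple, then C is simple and F is injective on object sets. -/
/-!
In a simple updown category the chain from `0̂` to `q` is unique, so every object covers at most
one object. Injectivity of `F` on objects then follows by induction on rank: two objects with the
same image cover objects with the same image, which coincide by induction, and injectivity of `F`
on `Hom(p, q) / Aut(p)` for covers identifies the two objects. Uniqueness of lower covers pulls back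
along the injective `F`; together with univalence it makes Hom-sets and chains of `C`
subsingletons, by splitting off the last cover.
-/

namespace UDData

variable {C D : UDData}

def LowerCoversUnique (C : UDData) : Prop :=
  ∀ ⦃r₁ r₂ q : C.Obj⦄, C.Hom r₁ q → C.Hom r₂ q →
    C.rank q = C.rank r₁ + 1 → C.rank q = C.rank r₂ + 1 → r₁ = r₂

theorem IsUpdown.exists_lower_cover (hC : C.IsUpdown) {p q : C.Obj} (f : C.Hom p q)
    (hpq : C.rank p < C.rank q) :
    ∃ (r : C.Obj) (g : C.Hom p r) (h : C.Hom r q), C.rank q = C.rank r + 1 ∧ C.comp g h = f := by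
  obtain ⟨k, hk⟩ : ∃ k, C.rank q = C.rank p + k + 1 := ⟨C.rank q - C.rank p - 1, by omega⟩
  induction k generalizing p with
  | zero => exact ⟨p, C.idm p, f, hk, C.idm_comp f⟩
  | succ k ih =>
    obtain ⟨r', g', h', hr', rfl⟩ := hC.factor f hpq
    obtain ⟨r, g, h, hr, rfl⟩ := ih h' (by omega) (by omega)
    exact ⟨r, C.comp g' g, h, hr, C.comp_assoc g' g h⟩

theorem IsUpdown.nonempty_chain (hC : C.IsUpdown) :
    ∀ (k : ℕ) {p q : C.Obj}, C.Hom p q → C.rank q = C.rank p + k → Nonempty (C.Chain k p q)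
  | 0, p, q, f, hk => by
    rcases hC.hom_rank p q ⟨f⟩ with hlt | rfl
    · omega
    · exact ⟨PLift.up rfl⟩
  | k + 1, _, _, f, hk => by
    obtain ⟨r, g, h, hr, -⟩ := hC.exists_lower_cover f (by omega)
    obtain ⟨c⟩ := hC.nonempty_chain k g (by omega)
    exact ⟨⟨r, c, h, hr⟩⟩

theorem IsUpdown.lowerCoversUnique (hC : C.IsUpdown)
    (hchain : ∀ n p q, Subsingleton (C.Chain n p q)) : C.LowerCoversUnique := by
  intro r₁ r₂ q g₁ g₂ h₁ h₂
  obtain ⟨c₁⟩ := hC.nonempty_chain (C.rank r₁) (hC.from_zhat r₁).some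
    (by rw [hC.rank_zhat, zero_add])
  obtain ⟨c₂⟩ := hC.nonempty_chain (C.rank r₁) (hC.from_zhat r₂).some
    (by rw [hC.rank_zhat]; omega)
  exact congrArg Sigma.fst <|
    (hchain (C.rank r₁ + 1) C.zhat q).elim ⟨r₁, c₁, g₁, h₁⟩ ⟨r₂, c₂, g₂, h₂⟩

theorem chain_subsingleton_of_lowerCoversUnique (hcov : C.LowerCoversUnique)
    (hhom : ∀ r q, C.rank q = C.rank r + 1 → Subsingleton (C.Hom r q)) :
    ∀ n p q, Subsingleton (C.Chain n p q)
  | 0, p, q => inferInstanceAs (Subsingleton (PLift (p = q)))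
  | n + 1, p, q => by
    have := chain_subsingleton_of_lowerCoversUnique hcov hhom n
    constructor
    rintro ⟨r₁, c₁, g₁, h₁⟩ ⟨r₂, c₂, g₂, h₂⟩
    obtain rfl := hcov g₁ g₂ h₁ h₂
    obtain rfl := Subsingleton.elim c₁ c₂
    obtain rfl := (hhom r₁ q h₁).elim g₁ g₂
    rfl

theorem IsUpdown.hom_subsingleton_of_lowerCoversUnique (hC : C.IsUpdown) (hCu : C.Univalent)
    (hcov : C.LowerCoversUnique)
    (hhom : ∀ r q, C.rank q = C.rank r + 1 → Subsingleton (C.Hom r q)) (p q : C.Obj) :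
    Subsingleton (C.Hom p q) := by
  constructor
  intro f g
  obtain ⟨k, hk⟩ : ∃ k, C.rank q = C.rank p + k := by
    rcases hC.hom_rank p q ⟨f⟩ with hlt | rfl
    · exact ⟨_, (Nat.add_sub_cancel' hlt.le).symm⟩
    · exact ⟨0, rfl⟩
  induction k generalizing q with
  | zero =>
    rcases hC.hom_rank p q ⟨f⟩ with hlt | rfl
    · omega
    · exact (hCu p).elim f g
  | succ k ih =>
    obtain ⟨r, f', f₁, hr, rfl⟩ := hC.exists_lower_cover f (by omega)
    obtain ⟨r', g', g₁, hr', rfl⟩ := hC.exists_lower_cover g (by omega)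
    obtain rfl := hcov f₁ g₁ hr hr'
    rw [ih r f' g' (by omega), (hhom r q hr).elim f₁ g₁]

theorem Mor.lowerCoversUnique (F : Mor C D) (hinj : Function.Injective F.obj)
    (hD : D.LowerCoversUnique) : C.LowerCoversUnique :=
  fun _ _ _ g₁ g₂ h₁ h₂ => hinj <| hD (F.map g₁) (F.map g₂)
    (by rw [F.rank_eq, F.rank_eq, h₁]) (by rw [F.rank_eq, F.rank_eq, h₂])

namespace Mor.IsGood

variable {F : Mor C D}

theorem univalent (hF : F.IsGood) (hD : D.Univalent) : C.Univalent :=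
  fun p => ⟨fun _ _ => hF.aut_inj p ((hD (F.obj p)).elim _ _)⟩

theorem map_injective_of_cover (hF : F.IsGood) (hCu : C.Univalent) {r q : C.Obj}
    (hrq : C.rank q = C.rank r + 1) :
    Function.Injective (F.map : C.Hom r q → D.Hom (F.obj r) (F.obj q)) := by
  intro f g hfg
  obtain ⟨_, a, ha⟩ := hF.pre_quot_inj f g hrq hrq rfl ⟨D.idm _, (D.idm_comp _).trans hfg⟩
  rwa [(hCu r).elim a (C.idm r), C.idm_comp] at ha

theorem eq_of_obj_eq_of_covers (hF : F.IsGood) (hD : ∀ p q, Subsingleton (D.Hom p q))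
    {r q₁ q₂ : C.Obj} (g₁ : C.Hom r q₁) (g₂ : C.Hom r q₂)
    (h₁ : C.rank q₁ = C.rank r + 1) (h₂ : C.rank q₂ = C.rank r + 1)
    (h : F.obj q₁ = F.obj q₂) : q₁ = q₂ := by
  obtain ⟨e, -⟩ := hF.pre_quot_inj g₁ g₂ h₁ h₂ h ⟨D.idm _, (hD _ _).elim _ _⟩
  exact e

theorem injective_obj (hC : C.IsUpdown) (hD : D.IsUpdown) (hF : F.IsGood) (hS : D.Simple) :
    Function.Injective F.obj := by
  have hcovD := hD.lowerCoversUnique hS.2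
  suffices ∀ n q₁ q₂, C.rank q₁ = n → F.obj q₁ = F.obj q₂ → q₁ = q₂ from
    fun q₁ q₂ => this _ q₁ q₂ rfl
  intro n
  induction n with
  | zero =>
    intro q₁ q₂ h₁ h
    have h₂ : C.rank q₂ = 0 := by rw [← F.rank_eq, ← h, F.rank_eq, h₁]
    rw [hC.zhat_unique q₁ h₁, hC.zhat_unique q₂ h₂]
  | succ n ih =>
    intro q₁ q₂ h₁ h
    have h₂ : C.rank q₂ = n + 1 := by rw [← F.rank_eq, ← h, F.rank_eq, h₁]
    obtain ⟨r₁, -, g₁, hr₁, -⟩ :=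
      hC.exists_lower_cover (hC.from_zhat q₁).some (by rw [hC.rank_zhat, h₁]; omega)
    obtain ⟨r₂, -, g₂, hr₂, -⟩ :=
      hC.exists_lower_cover (hC.from_zhat q₂).some (by rw [hC.rank_zhat, h₂]; omega)
    have hFr : F.obj r₁ = F.obj r₂ := hcovD (F.map g₁) (UDData.cast h.symm (F.map g₂))
      (by rw [F.rank_eq, F.rank_eq, hr₁]) (by rw [h, F.rank_eq, F.rank_eq, hr₂])
    obtain rfl := ih r₁ r₂ (by omega) hFr
    exact hF.eq_of_obj_eq_of_covers hS.1 g₁ g₂ hr₁ hr₂ h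

end Mor.IsGood

end UDData

theorem updown_morphism_reflects (C D : UDData) (hC : C.IsUpdown) (hD : D.IsUpdown)
    (F : UDData.Mor C D) (hF : F.IsGood) :
    (D.Univalent → C.Univalent) ∧
    (D.Simple → C.Simple ∧ Function.Injective F.obj) := by
  refine ⟨hF.univalent, fun hS => ?_⟩
  have hCu : C.Univalent := hF.univalent fun p => hS.1 p p
  have hinj : Function.Injective F.obj := hF.injective_obj hC hD hS
  have hcov : C.LowerCoversUnique := F.lowerCoversUnique hinj (hD.lowerCoversUnique hS.2)
  have hhom : ∀ r q, C.rank q = C.rank r + 1 → Subsingleton (C.Hom r q) :=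
    fun _ _ hrq => ⟨fun f g => hF.map_injective_of_cover hCu hrq ((hS.1 _ _).elim _ _)⟩
  exact ⟨⟨hC.hom_subsingleton_of_lowerCoversUnique hCu hcov hhom,
    UDData.chain_subsingleton_of_lowerCoversUnique hcov hhom⟩, hinj⟩
end

section
/- If C and D are simple updown categories that are both evenly up-covered with the same sequence {u_n}, then C and D are isomorphic as updown categories. -/
/-!
In a simple updown category the maximal chain from `zhat` to any object is unique, so every object
of positive rank covers exactly one object: the covering relation is a rooted tree graded by rank,
in which every object of rank `n` has exactly `u n` children. Two such trees are isomorphic, by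
matching their levels recursively, level `n + 1` being the disjoint union of the children of the
objects of level `n`.
-/

structure IsRankedTree {α : Type*} (r : α → ℕ) (R : α → α → Prop) : Prop where
  rank_succ : ∀ {p q}, R p q → r q = r p + 1
  existsUnique_parent : ∀ q, 0 < r q → ∃! p, R p q
  existsUnique_root : ∃! p, r p = 0

namespace IsRankedTree

variable {α β : Type*} {r : α → ℕ} {s : β → ℕ} {R : α → α → Prop} {S : β → β → Prop}

theorem parent_eq (h : IsRankedTree r R) {p₁ p₂ q : α} (h₁ : R p₁ q) (h₂ : R p₂ q) : p₁ = p₂ :=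
  (h.existsUnique_parent q (by rw [h.rank_succ h₁]; omega)).unique h₁ h₂

noncomputable def sigmaChildrenEquiv (h : IsRankedTree r R) (n : ℕ) :
    (Σ p : {p // r p = n}, {q // R p q}) ≃ {q // r q = n + 1} :=
  Equiv.ofBijective (fun x => ⟨x.2.1, by rw [h.rank_succ x.2.2, x.1.2]⟩) <| by
    constructor
    · rintro ⟨⟨p₁, hp₁⟩, q, hq₁⟩ ⟨⟨p₂, hp₂⟩, _, hq₂⟩ hq
      cases congrArg Subtype.val hq
      cases h.parent_eq hq₁ hq₂
      rfl
    · rintro ⟨q, hq⟩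
      obtain ⟨p, hpq, -⟩ := h.existsUnique_parent q (by omega)
      exact ⟨⟨⟨p, by have := h.rank_succ hpq; omega⟩, q, hpq⟩, rfl⟩

theorem sigmaChildrenEquiv_symm_apply (h : IsRankedTree r R) {n : ℕ} {p q : α} (hp : r p = n)
    (hq : r q = n + 1) (hpq : R p q) :
    (h.sigmaChildrenEquiv n).symm ⟨q, hq⟩ = ⟨⟨p, hp⟩, q, hpq⟩ :=
  (h.sigmaChildrenEquiv n).symm_apply_eq.mpr rfl

noncomputable def rootEquiv (hR : IsRankedTree r R) (hS : IsRankedTree s S) :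
    {p // r p = 0} ≃ {p // s p = 0} :=
  letI := ((unique_subtype_iff_existsUnique _).mpr hR.existsUnique_root).some
  letI := ((unique_subtype_iff_existsUnique _).mpr hS.existsUnique_root).some
  Equiv.ofUnique _ _

noncomputable def levelEquiv (hR : IsRankedTree r R) (hS : IsRankedTree s S)
    (hchildren : ∀ p p', r p = s p' → Nonempty ({q // R p q} ≃ {q' // S p' q'})) :
    ∀ n, {p // r p = n} ≃ {p' // s p' = n}
  | 0 => hR.rootEquiv hS
  | n + 1 =>
    let e := hR.levelEquiv hS hchildren n
    (hR.sigmaChildrenEquiv n).symm.trans <|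
      (Equiv.sigmaCongr e fun p => (hchildren p.1 (e p).1 (p.2.trans (e p).2.symm)).some).trans
        (hS.sigmaChildrenEquiv n)

theorem levelEquiv_succ_apply (hR : IsRankedTree r R) (hS : IsRankedTree s S)
    (hchildren : ∀ p p', r p = s p' → Nonempty ({q // R p q} ≃ {q' // S p' q'}))
    {n : ℕ} {p q : α} (hp : r p = n) (hq : r q = n + 1) (hpq : R p q) :
    S (hR.levelEquiv hS hchildren n ⟨p, hp⟩) (hR.levelEquiv hS hchildren (n + 1) ⟨q, hq⟩) := by
  simp only [levelEquiv, Equiv.trans_apply, hR.sigmaChildrenEquiv_symm_apply hp hq hpq]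
  exact ((hchildren p _ (hp.trans (hR.levelEquiv hS hchildren n ⟨p, hp⟩).2.symm)).some ⟨q, hpq⟩).2

theorem exists_equiv (hR : IsRankedTree r R) (hS : IsRankedTree s S)
    (hchildren : ∀ p p', r p = s p' → Nonempty ({q // R p q} ≃ {q' // S p' q'})) :
    ∃ φ : α ≃ β, (∀ p, s (φ p) = r p) ∧ ∀ p q, R p q ↔ S (φ p) (φ q) := by
  let e := hR.levelEquiv hS hchildren
  let φ : α ≃ β := (Equiv.sigmaFiberEquiv r).symm.trans
    ((Equiv.sigmaCongrRight e).trans (Equiv.sigmaFiberEquiv s))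
  have hφ : ∀ n p (hp : r p = n), φ p = e n ⟨p, hp⟩ := by
    rintro _ p rfl
    rfl
  have hφR : ∀ p q, R p q → S (φ p) (φ q) := fun p q hpq => by
    rw [hφ _ p rfl, hφ _ q (hR.rank_succ hpq)]
    exact hR.levelEquiv_succ_apply hS hchildren rfl _ hpq
  have hφs : ∀ p, s (φ p) = r p := fun p => (e _ ⟨p, rfl⟩).2
  refine ⟨φ, hφs, fun p q => ⟨hφR p q, fun hpq => ?_⟩⟩
  have hq : r q = r p + 1 := by rw [← hφs, ← hφs, hS.rank_succ hpq]
  obtain ⟨p₀, hp₀q, -⟩ := hR.existsUnique_parent q (by omega)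
  cases φ.injective (hS.parent_eq hpq (hφR _ _ hp₀q))
  exact hp₀q

end IsRankedTree

theorem finsum_ite_one_eq_natCard {α : Type*} (P : α → Prop) [DecidablePred P] :
    (∑ᶠ a, if P a then 1 else 0 : ℕ) = Nat.card {a // P a} := by
  change _ = Set.ncard {a | P a}
  rw [← finsum_one, finsum_mem_def]
  simp only [Set.indicator_apply, Set.mem_ofPred_eq]

namespace UDData

def Covers (C : UDData) (p q : C.Obj) : Prop :=
  C.rank q = C.rank p + 1 ∧ Nonempty (C.Hom p q)

variable {C : UDData}

namespace IsUpdown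

theorem exists_hom_of_le_rank (hC : C.IsUpdown) (q : C.Obj) :
    ∀ k ≤ C.rank q, ∃ r, C.rank r = k ∧ Nonempty (C.Hom r q)
  | 0, _ => ⟨C.zhat, hC.rank_zhat, hC.from_zhat q⟩
  | k + 1, hk => by
    obtain ⟨r, hr, ⟨f⟩⟩ := hC.exists_hom_of_le_rank q k (by omega)
    obtain ⟨r', -, g, hr', -⟩ := hC.factor f (by omega)
    exact ⟨r', by omega, ⟨g⟩⟩

theorem exists_covers (hC : C.IsUpdown) {q : C.Obj} (hq : 0 < C.rank q) : ∃ p, C.Covers p q := by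
  obtain ⟨p, hp, hpq⟩ := hC.exists_hom_of_le_rank q (C.rank q - 1) (by omega)
  exact ⟨p, by omega, hpq⟩

theorem nonempty_chain_s7 (hC : C.IsUpdown) : ∀ n (p : C.Obj), C.rank p = n →
    Nonempty (C.Chain n C.zhat p)
  | 0, p, hp => ⟨⟨(hC.zhat_unique p hp).symm⟩⟩
  | n + 1, p, hp => by
    obtain ⟨r, hr, ⟨f⟩⟩ := hC.exists_covers (q := p) (by omega)
    obtain ⟨c⟩ := hC.nonempty_chain_s7 n r (by omega)
    exact ⟨⟨r, c, f, hr⟩⟩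

theorem finite_covers (hC : C.IsUpdown) (p : C.Obj) : Finite {q // C.Covers p q} :=
  ((hC.rank_finite (C.rank p + 1)).subset fun _ hq => hq.1).to_subtype

end IsUpdown

namespace Simple

theorem covers_unique (hCs : C.Simple) (hC : C.IsUpdown) {p₁ p₂ q : C.Obj}
    (h₁ : C.Covers p₁ q) (h₂ : C.Covers p₂ q) : p₁ = p₂ := by
  obtain ⟨hq₁, ⟨f₁⟩⟩ := h₁
  obtain ⟨hq₂, ⟨f₂⟩⟩ := h₂
  obtain ⟨c₁⟩ := hC.nonempty_chain_s7 _ p₁ rfl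
  obtain ⟨c₂⟩ := hC.nonempty_chain_s7 _ p₂ (by omega : C.rank p₂ = C.rank p₁)
  exact congrArg Sigma.fst <| (hCs.2 (C.rank p₁ + 1) C.zhat q).allEq
    ⟨p₁, c₁, f₁, hq₁⟩ ⟨p₂, c₂, f₂, by omega⟩

open Classical in
theorem uStep_eq (hCs : C.Simple) (p q : C.Obj) :
    C.uStep p q = if C.Covers p q then 1 else 0 := by
  have hcard : ∀ a b : C.Obj, Nonempty (C.Hom a b) → Nat.card (C.Hom a b) = 1 := fun a b ⟨f⟩ =>
    haveI := hCs.1 a b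
    Nat.card_of_subsingleton f
  have haut : C.nAut q = 1 := hcard q q ⟨C.idm q⟩
  unfold uStep u Covers
  rw [haut, Nat.div_one]
  by_cases hpq : Nonempty (C.Hom p q)
  · simp only [hcard p q hpq, hpq, and_true]
  · simp only [not_nonempty_iff.mp hpq, Nat.card_of_isEmpty, hpq, and_false, ite_false,
      ite_self]

theorem card_covers {u : ℕ → ℕ} (hCs : C.Simple) (hCu : C.EUC u) (p : C.Obj) :
    Nat.card {q // C.Covers p q} = u (C.rank p) := by
  classical
  rw [← hCu p, ← finsum_ite_one_eq_natCard]
  exact finsum_congr fun q => (hCs.uStep_eq p q).symm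

theorem isRankedTree (hCs : C.Simple) (hC : C.IsUpdown) : IsRankedTree C.rank C.Covers where
  rank_succ h := h.1
  existsUnique_parent _ hq :=
    (hC.exists_covers hq).elim fun p hp => ⟨p, hp, fun _ hp' => hCs.covers_unique hC hp' hp⟩
  existsUnique_root := ⟨C.zhat, hC.rank_zhat, hC.zhat_unique⟩

end Simple

end UDData

theorem simple_evenly_upcovered_unique (C D : UDData) (hC : C.IsUpdown) (hD : D.IsUpdown)
    (hCs : C.Simple) (hDs : D.Simple) (u : ℕ → ℕ) (hCu : C.EUC u) (hDu : D.EUC u) :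
    ∃ φ : C.Obj → D.Obj, Function.Bijective φ ∧ (∀ p, D.rank (φ p) = C.rank p) ∧
      ∀ p q : C.Obj,
        (C.rank q = C.rank p + 1 ∧ Nonempty (C.Hom p q)) ↔
        (D.rank (φ q) = D.rank (φ p) + 1 ∧ Nonempty (D.Hom (φ p) (φ q))) := by
  have hchildren (p : C.Obj) (p' : D.Obj) (h : C.rank p = D.rank p') :
      Nonempty ({q // C.Covers p q} ≃ {q' // D.Covers p' q'}) := by
    have := hC.finite_covers p
    have := hD.finite_covers p'
    rw [← Finite.card_eq, hCs.card_covers hCu, hDs.card_covers hDu, h]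
  obtain ⟨φ, hφ_rank, hφ_covers⟩ :=
    (hCs.isRankedTree hC).exists_equiv (hDs.isRankedTree hD) hchildren
  exact ⟨φ, φ.bijective, hφ_rank, hφ_covers⟩
end

section
/- For updown categories C and D, the object generating functions satisfy O_{C×D}(t) = O_C(t)·O_D(t), and the morphism generating functions satisfy M_{C×D}(t) = M_C(t)·O_D(t²) + O_C(t²)·M_D(t). -/
/-!
Each generating function is a series `∑ₐ w a · t ^ r a` over a type graded by `r` with finite
fibres, and such series multiply by passing to the product type, graded by the sum of the ranks
and weighted by the product of the weights. Automorphism groups in `C × D` are products, which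
gives the object identity. A covering in `C × D` moves exactly one coordinate, with the
multiplicity of that coordinate, since a morphism moving both raises the rank by at least two.
The coverings moving the `C`-coordinate are therefore indexed by a covering `p ⋖ q` of `C` and an
object `d` of `D`, graded by `|p| + |q| + 2|d|`, and they contribute `M_C(t) · O_D(t²)`;
symmetrically for `D`.
-/

open Finset PowerSeries

section RankGF

variable {α β R : Type*} [CommSemiring R]

/-- `∑ₐ w a · t ^ r a`. The coefficients are `finsum`s, hence junk (zero) in any degree whose
fibre meets the support of `w` in an infinite set. -/
noncomputable def rankGF (r : α → ℕ) (w : α → R) : PowerSeries R :=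
  PowerSeries.mk fun n => ∑ᶠ a, if r a = n then w a else 0

lemma coeff_rankGF (r : α → ℕ) (w : α → R) (n : ℕ) :
    coeff n (rankGF r w) = ∑ᶠ a, if r a = n then w a else 0 :=
  coeff_mk _ _

lemma coeff_rankGF_eq_sum {r : α → ℕ} (w : α → R) {n : ℕ} {s : Finset α}
    (hs : ∀ a, r a = n → a ∈ s) :
    coeff n (rankGF r w) = ∑ a ∈ s, if r a = n then w a else 0 := by
  refine (coeff_rankGF r w n).trans (finsum_eq_sum_of_support_subset _ fun a ha => ?_)
  exact hs a (not_imp_comm.1 (fun h => if_neg h) ha)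

lemma finite_rank_le {r : α → ℕ} (hr : ∀ n, (r ⁻¹' {n}).Finite) (n : ℕ) :
    {a | r a ≤ n}.Finite :=
  ((Set.finite_Iic n).biUnion fun k _ => hr k).subset fun _ ha => Set.mem_biUnion ha rfl

lemma finite_fibers_add {r : α → ℕ} {s : β → ℕ} (hr : ∀ n, (r ⁻¹' {n}).Finite)
    (hs : ∀ n, (s ⁻¹' {n}).Finite) (n : ℕ) :
    ((fun x : α × β => r x.1 + s x.2) ⁻¹' {n}).Finite :=
  ((finite_rank_le hr n).prod (finite_rank_le hs n)).subset fun x hx => by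
    simp only [Set.mem_preimage, Set.mem_singleton_iff] at hx
    exact ⟨show r x.1 ≤ n by omega, show s x.2 ≤ n by omega⟩

lemma finite_fibers_two_mul {r : α → ℕ} (hr : ∀ n, (r ⁻¹' {n}).Finite) (n : ℕ) :
    ((fun a => 2 * r a) ⁻¹' {n}).Finite :=
  (hr (n / 2)).subset fun a ha => by
    simp only [Set.mem_preimage, Set.mem_singleton_iff] at ha ⊢
    omega

lemma sum_antidiagonal_ite_mul_ite (n i j : ℕ) (x y : R) :
    ∑ k ∈ antidiagonal n, (if i = k.1 then x else 0) * (if j = k.2 then y else 0) =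
      if i + j = n then x * y else 0 := by
  have h : ∀ k : ℕ × ℕ, (i = k.1 ∧ j = k.2) ↔ (i, j) = k := fun _ =>
    (Prod.ext_iff (x := (i, j))).symm
  simp_rw [ite_zero_mul_ite_zero, h, sum_ite_eq, HasAntidiagonal.mem_antidiagonal]

lemma rankGF_mul {r : α → ℕ} {s : β → ℕ} (hr : ∀ n, (r ⁻¹' {n}).Finite)
    (hs : ∀ n, (s ⁻¹' {n}).Finite) (v : α → R) (w : β → R) :
    rankGF r v * rankGF s w =
      rankGF (fun x : α × β => r x.1 + s x.2) (fun x => v x.1 * w x.2) := by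
  ext n
  set A := (finite_rank_le hr n).toFinset
  set B := (finite_rank_le hs n).toFinset
  have hA : ∀ a, r a ≤ n → a ∈ A := fun a h => (Set.Finite.mem_toFinset _).2 h
  have hB : ∀ b, s b ≤ n → b ∈ B := fun b h => (Set.Finite.mem_toFinset _).2 h
  calc coeff n (rankGF r v * rankGF s w)
      = ∑ k ∈ antidiagonal n, ∑ a ∈ A, ∑ b ∈ B,
          (if r a = k.1 then v a else 0) * (if s b = k.2 then w b else 0) := by
        rw [coeff_mul]
        refine sum_congr rfl fun k hk => ?_
        have hk := mem_antidiagonal.1 hk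
        rw [coeff_rankGF_eq_sum v (s := A) fun a ha => hA a (by omega),
          coeff_rankGF_eq_sum w (s := B) fun b hb => hB b (by omega), sum_mul_sum]
    _ = ∑ x ∈ A ×ˢ B, if r x.1 + s x.2 = n then v x.1 * w x.2 else 0 := by
        rw [sum_comm, sum_product]
        refine sum_congr rfl fun a _ => ?_
        rw [sum_comm]
        exact sum_congr rfl fun b _ => sum_antidiagonal_ite_mul_ite n _ _ _ _
    _ = _ := (coeff_rankGF_eq_sum _ fun x hx => mem_product.2
          ⟨hA x.1 (by omega), hB x.2 (by omega)⟩).symm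

lemma rankGF_add {r : α → ℕ} (hr : ∀ n, (r ⁻¹' {n}).Finite) (v w : α → R) :
    rankGF r (v + w) = rankGF r v + rankGF r w := by
  ext n
  have hs : ∀ a, r a = n → a ∈ (hr n).toFinset := fun a h => (Set.Finite.mem_toFinset _).2 h
  simp only [map_add, coeff_rankGF_eq_sum _ hs, Pi.add_apply, ← sum_add_distrib, ite_add_zero]

lemma rankGF_comp_of_injective {f : β → α} (hf : Function.Injective f) (r : α → ℕ) {w : α → R}
    (hw : Function.support w ⊆ Set.range f) :
    rankGF (r ∘ f) (w ∘ f) = rankGF r w := by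
  ext n
  simp only [coeff_rankGF, Function.comp_apply]
  set g : α → R := fun a => if r a = n then w a else 0
  rw [← finsum_mem_range (f := g) hf, ← finsum_mem_univ g]
  refine finsum_mem_inter_support_eq' _ _ _ fun a ha => iff_of_true (hw fun h => ha ?_) trivial
  simp [g, h]

lemma rankGF_pairs_of_snd_eq [DecidableEq β] {r : α → ℕ} {s : β → ℕ}
    (hr : ∀ n, (r ⁻¹' {n}).Finite) (hs : ∀ n, (s ⁻¹' {n}).Finite) (v : α × α → R) (w : β → R) :
    rankGF (fun x : (α × β) × (α × β) => (r x.1.1 + s x.1.2) + (r x.2.1 + s x.2.2))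
        (fun x => if x.1.2 = x.2.2 then v (x.1.1, x.2.1) * w x.1.2 else 0) =
      rankGF (fun y : α × α => r y.1 + r y.2) v * rankGF (fun b => 2 * s b) w := by
  rw [rankGF_mul (finite_fibers_add hr hr) (finite_fibers_two_mul hs),
    ← rankGF_comp_of_injective (f := fun z : (α × α) × β => ((z.1.1, z.2), (z.1.2, z.2)))]
  · congr 1 <;> funext z
    · simp only [Function.comp_apply]
      omega
    · simp
  · intro z z' h
    simp only [Prod.mk.injEq] at h
    ext <;> simp [h]
  · rintro ⟨⟨a, b⟩, a', b'⟩ hx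
    obtain rfl : b = b' := by_contra fun h => hx (if_neg h)
    exact ⟨((a, a'), b), rfl⟩

lemma rankGF_pairs_of_fst_eq [DecidableEq α] {r : α → ℕ} {s : β → ℕ}
    (hr : ∀ n, (r ⁻¹' {n}).Finite) (hs : ∀ n, (s ⁻¹' {n}).Finite) (v : α → R) (w : β × β → R) :
    rankGF (fun x : (α × β) × (α × β) => (r x.1.1 + s x.1.2) + (r x.2.1 + s x.2.2))
        (fun x => if x.1.1 = x.2.1 then v x.1.1 * w (x.1.2, x.2.2) else 0) =
      rankGF (fun a => 2 * r a) v * rankGF (fun y : β × β => s y.1 + s y.2) w := by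
  rw [rankGF_mul (finite_fibers_two_mul hr) (finite_fibers_add hs hs),
    ← rankGF_comp_of_injective (f := fun z : α × (β × β) => ((z.1, z.2.1), (z.1, z.2.2)))]
  · congr 1 <;> funext z
    · simp only [Function.comp_apply]
      omega
    · simp
  · intro z z' h
    simp only [Prod.mk.injEq] at h
    ext <;> simp [h]
  · rintro ⟨⟨a, b⟩, a', b'⟩ hx
    obtain rfl : a = a' := by_contra fun h => hx (if_neg h)
    exact ⟨(a, b, b'), rfl⟩

lemma sqSub_rankGF (r : α → ℕ) (w : α → ℚ) :
    UDData.sqSub (rankGF r w) = rankGF (fun a => 2 * r a) w := by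
  refine PowerSeries.ext fun n => ?_
  rw [UDData.sqSub, coeff_mk, coeff_rankGF, coeff_rankGF]
  split_ifs with h
  · obtain ⟨m, rfl⟩ := h
    simp only [Nat.mul_div_cancel_left m two_pos, Nat.mul_left_cancel_iff two_pos]
  · exact (finsum_eq_zero_of_forall_eq_zero fun a => if_neg fun ha => h ⟨r a, ha.symm⟩).symm

end RankGF

namespace UDData

variable {C D : UDData}

lemma IsUpdown.nAut_pos (hC : C.IsUpdown) (p : C.Obj) : 0 < C.nAut p :=
  have := hC.hom_finite p p
  have : Nonempty (C.Hom p p) := ⟨C.idm p⟩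
  Nat.card_pos

lemma IsUpdown.rank_lt_of_ne (hC : C.IsUpdown) {p q : C.Obj} (f : C.Hom p q) (h : p ≠ q) :
    C.rank p < C.rank q :=
  (hC.hom_rank p q ⟨f⟩).resolve_right h

lemma card_hom_prod (p q : C.Obj × D.Obj) :
    Nat.card ((C.prod D).Hom p q) = Nat.card (C.Hom p.1 q.1) * Nat.card (D.Hom p.2 q.2) :=
  Nat.card_prod _ _

lemma nAut_prod (p : C.Obj × D.Obj) : (C.prod D).nAut p = C.nAut p.1 * D.nAut p.2 :=
  card_hom_prod p p

lemma u_prod_of_fst_eq (hC : C.IsUpdown) (p : C.Obj) (q q' : D.Obj) :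
    (C.prod D).u (p, q) (p, q') = D.u q q' := by
  unfold UDData.u
  rw [card_hom_prod, nAut_prod]
  exact Nat.mul_div_mul_left _ _ (hC.nAut_pos p)

lemma u_prod_of_snd_eq (hD : D.IsUpdown) (p p' : C.Obj) (q : D.Obj) :
    (C.prod D).u (p, q) (p', q) = C.u p p' := by
  unfold UDData.u
  rw [card_hom_prod, nAut_prod]
  exact Nat.mul_div_mul_right _ _ (hD.nAut_pos q)

lemma u_prod_eq_zero (hC : C.IsUpdown) (hD : D.IsUpdown) {p p' : C.Obj} {q q' : D.Obj}
    (hp : p ≠ p') (hq : q ≠ q') (hrank : C.rank p' + D.rank q' = C.rank p + D.rank q + 1) :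
    (C.prod D).u (p, q) (p', q') = 0 := by
  have : IsEmpty ((C.prod D).Hom (p, q) (p', q')) := ⟨fun f => by
    have hp' : C.rank p < C.rank p' := hC.rank_lt_of_ne f.1 hp
    have hq' : D.rank q < D.rank q' := hD.rank_lt_of_ne f.2 hq
    omega⟩
  unfold UDData.u
  rw [Nat.card_of_isEmpty, Nat.zero_div]

open Classical in
lemma uStep_prod (hC : C.IsUpdown) (hD : D.IsUpdown) (x y : C.Obj × D.Obj) :
    (C.prod D).uStep x y =
      (if x.2 = y.2 then C.uStep x.1 y.1 else 0) + (if x.1 = y.1 then D.uStep x.2 y.2 else 0) := by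
  obtain ⟨p, q⟩ := x
  obtain ⟨p', q'⟩ := y
  change (if C.rank p' + D.rank q' = C.rank p + D.rank q + 1 then _ else 0) = _
  by_cases hp : p = p' <;> by_cases hq : q = q'
  · subst hp hq
    simp [uStep]
  · subst hp
    simp [uStep, hq, u_prod_of_fst_eq hC, add_assoc]
  · subst hq
    simp [uStep, hp, u_prod_of_snd_eq hD, Nat.add_right_comm _ (D.rank q)]
  · simp only [hp, hq, if_false, add_zero]
    split_ifs with hrank
    exacts [u_prod_eq_zero hC hD hp hq hrank, rfl]

lemma objGF_eq_rankGF (C : UDData) : C.objGF = rankGF C.rank fun p => (C.nAut p : ℚ)⁻¹ := rfl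

lemma morGF_eq_rankGF (hC : ∀ n, (C.rank ⁻¹' {n}).Finite) :
    C.morGF = rankGF (fun x : C.Obj × C.Obj => C.rank x.1 + C.rank x.2)
      fun x => (C.uStep x.1 x.2 : ℚ) * (C.nAut x.1 : ℚ)⁻¹ := by
  refine PowerSeries.ext fun n => ?_
  rw [morGF, coeff_mk, coeff_rankGF, finsum_curry]
  exact (finite_fibers_add hC hC n).subset fun x hx => not_imp_comm.1 (fun h => if_neg h) hx

lemma objGF_prod (hC : ∀ n, (C.rank ⁻¹' {n}).Finite) (hD : ∀ n, (D.rank ⁻¹' {n}).Finite) :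
    (C.prod D).objGF = C.objGF * D.objGF := by
  rw [objGF_eq_rankGF, objGF_eq_rankGF, objGF_eq_rankGF, rankGF_mul hC hD]
  congr 1
  funext (p : C.Obj × D.Obj)
  rw [nAut_prod, Nat.cast_mul, mul_inv]

open Classical in
lemma morGF_prod (hC : C.IsUpdown) (hD : D.IsUpdown) :
    (C.prod D).morGF = C.morGF * sqSub D.objGF + sqSub C.objGF * D.morGF := by
  have hCD : ∀ n, ((C.prod D).rank ⁻¹' {n}).Finite :=
    finite_fibers_add hC.rank_finite hD.rank_finite
  set R := fun x : (C.Obj × D.Obj) × (C.Obj × D.Obj) =>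
    (C.rank x.1.1 + D.rank x.1.2) + (C.rank x.2.1 + D.rank x.2.2)
  set vC := fun y : C.Obj × C.Obj => (C.uStep y.1 y.2 : ℚ) * (C.nAut y.1 : ℚ)⁻¹
  set vD := fun y : D.Obj × D.Obj => (D.uStep y.1 y.2 : ℚ) * (D.nAut y.1 : ℚ)⁻¹
  set aC := fun p : C.Obj => (C.nAut p : ℚ)⁻¹
  set aD := fun q : D.Obj => (D.nAut q : ℚ)⁻¹
  have hsplit : (C.prod D).morGF = rankGF R
      ((fun x => if x.1.2 = x.2.2 then vC (x.1.1, x.2.1) * aD x.1.2 else 0) +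
        fun x => if x.1.1 = x.2.1 then aC x.1.1 * vD (x.1.2, x.2.2) else 0) := by
    rw [morGF_eq_rankGF hCD]
    congr 1
    funext (x : (C.Obj × D.Obj) × (C.Obj × D.Obj))
    simp only [Pi.add_apply, vC, vD, aC, aD, uStep_prod hC hD, nAut_prod]
    push_cast
    split_ifs <;> ring
  rw [hsplit, rankGF_add (r := R) (finite_fibers_add hCD hCD),
    rankGF_pairs_of_snd_eq hC.rank_finite hD.rank_finite,
    rankGF_pairs_of_fst_eq hC.rank_finite hD.rank_finite, morGF_eq_rankGF hC.rank_finite,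
    morGF_eq_rankGF hD.rank_finite, objGF_eq_rankGF, objGF_eq_rankGF, sqSub_rankGF, sqSub_rankGF]

end UDData

theorem updown_prod_genfun (C D : UDData) (hC : C.IsUpdown) (hD : D.IsUpdown) :
    (C.prod D).objGF = C.objGF * D.objGF ∧
    (C.prod D).morGF = C.morGF * UDData.sqSub D.objGF + UDData.sqSub C.objGF * D.morGF :=
  ⟨UDData.objGF_prod hC.rank_finite hD.rank_finite, UDData.morGF_prod hC hD⟩
end

section
/- Every univalent updown category C has a universal cover: the category C̃ whose rank-n objects are strings (f_1, ..., f_n) of composable morphisms between adjacent ranks starting at 0̂, and whose morphisms are inclusions of initial substrings, admits a covering map π: C̃ → C, and for any other covering map φ: C' → C there exists a covering map ψ: C̃ → C' with π = φ∘ψ. -/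
/-!
The strings from `0̂`, ordered by "is an initial substring of", form a thin updown category,
and `π` takes a string to its endpoint. A morphism is a covering exactly when it is surjective
on objects and bijective on the rank-raising steps out of each object; for `π` this holds because
the steps out of a string are its one-step extensions. For a covering `φ : C' → C`, pushing
strings forward along `φ` is a bijection between the strings of `C'` and those of `C` (by
induction on the length: each step lifts uniquely), and it preserves and reflects the prefix
order. So the universal covers of `C'` and `C` are isomorphic; `ψ` is this isomorphism followed
by the projection of `C'`, and `ψ ∘ φ = π` because the projections commute with pushing forward.
-/

namespace UDData

section Arrow

variable {C : UDData}

def arrow {s t : C.Obj} (f : C.Hom s t) : Σ s t, C.Hom s t := ⟨s, t, f⟩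

def castSrc {p p' q : C.Obj} (h : p = p') (f : C.Hom p q) : C.Hom p' q := h ▸ f

theorem arrow_injective {s t : C.Obj} : Function.Injective (arrow : C.Hom s t → _) := by
  intro f g h
  simpa [arrow] using h

theorem arrow_eq_arrow {s t s' t' : C.Obj} {f : C.Hom s t} {f' : C.Hom s' t'}
    (h : arrow f = arrow f') : s = s' ∧ t = t' ∧ HEq f f' := by
  cases h
  exact ⟨rfl, rfl, HEq.rfl⟩

theorem arrow_castSrc {p p' q : C.Obj} (h : p = p') (f : C.Hom p q) :
    arrow (castSrc h f) = arrow f := by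
  subst h; rfl

theorem arrow_comp {s t r s' t' r' : C.Obj} {f : C.Hom s t} {g : C.Hom t r}
    {f' : C.Hom s' t'} {g' : C.Hom t' r'} (hf : arrow f = arrow f') (hg : arrow g = arrow g') :
    arrow (C.comp f g) = arrow (C.comp f' g') := by
  obtain ⟨rfl, rfl, hf⟩ := arrow_eq_arrow hf
  obtain ⟨-, rfl, hg⟩ := arrow_eq_arrow hg
  cases hf; cases hg; rfl

theorem arrow_eq_of_subsingleton [∀ p q, Subsingleton (C.Hom p q)] {s t s' t' : C.Obj}
    (hs : s = s') (ht : t = t') (f : C.Hom s t) (f' : C.Hom s' t') : arrow f = arrow f' := by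
  subst hs ht
  rw [Subsingleton.elim f f']

end Arrow

def StepsFrom (C : UDData) (p : C.Obj) : Type :=
  {g : Σ t, C.Hom p t // C.rank g.1 = C.rank p + 1}

theorem sigma_mk_cast {C : UDData} {p q q' : C.Obj} (h : q = q') (f : C.Hom p q) :
    (⟨q', C.cast h f⟩ : Σ t, C.Hom p t) = ⟨q, f⟩ := by
  subst h; rfl

theorem sigma_mk_eq_iff_cast {C : UDData} {p q q' : C.Obj} (f : C.Hom p q) (f' : C.Hom p q') :
    (⟨q, f⟩ : Σ t, C.Hom p t) = ⟨q', f'⟩ ↔ ∃ h : q = q', C.cast h f = f' := by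
  constructor
  · intro h; cases h; exact ⟨rfl, rfl⟩
  · rintro ⟨rfl, rfl⟩; rfl

namespace Mor

variable {A B D : UDData}

def id (A : UDData) : Mor A A where
  obj p := p
  map f := f
  map_idm _ := rfl
  map_comp _ _ := rfl
  rank_eq _ := rfl

theorem id_comp (F : Mor A B) : (Mor.id A).comp F = F := rfl

theorem comp_assoc (F : Mor A B) (G : Mor B D) {E : UDData} (H : Mor D E) :
    (F.comp G).comp H = F.comp (G.comp H) := rfl

theorem arrow_map (F : Mor A B) {s t s' t' : A.Obj} {f : A.Hom s t} {f' : A.Hom s' t'}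
    (h : arrow f = arrow f') : arrow (F.map f) = arrow (F.map f') := by
  obtain ⟨rfl, rfl, h⟩ := arrow_eq_arrow h
  cases h; rfl

theorem ext_of_arrow {F G : Mor A B} (hobj : ∀ p, F.obj p = G.obj p)
    (hmap : ∀ {p q : A.Obj} (f : A.Hom p q), arrow (F.map f) = arrow (G.map f)) : F = G := by
  obtain ⟨Fo, Fm, _, _, _⟩ := F
  obtain ⟨Go, Gm, _, _, _⟩ := G
  obtain rfl : Fo = Go := funext hobj
  obtain rfl : @Fm = @Gm := by
    funext p q f
    exact arrow_injective (hmap f)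
  rfl

def stepMap (F : Mor A B) (p : A.Obj) :
    A.StepsFrom p → B.StepsFrom (F.obj p) :=
  fun g => ⟨⟨F.obj g.1.1, F.map g.1.2⟩, by rw [F.rank_eq, F.rank_eq, g.2]⟩

theorem isCovering_iff (F : Mor A B) :
    F.IsCovering ↔ Function.Surjective F.obj ∧ ∀ p, Function.Bijective (F.stepMap p) := by
  refine and_congr_right fun hsurj => ⟨fun h p => ⟨?_, ?_⟩, fun h p q hq => ⟨?_, ?_⟩⟩
  · rintro ⟨⟨t₁, g₁⟩, h₁⟩ ⟨⟨t₂, g₂⟩, h₂⟩ he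
    obtain ⟨e, he⟩ := (sigma_mk_eq_iff_cast _ _).mp (congrArg Subtype.val he)
    have := (h p t₂ h₂).1 (a₁ := ⟨⟨t₁, e⟩, g₁⟩) (a₂ := ⟨⟨t₂, rfl⟩, g₂⟩) he
    cases this
    rfl
  · rintro ⟨⟨s, f⟩, hs⟩
    obtain ⟨q, rfl⟩ := hsurj s
    have hq : A.rank q = A.rank p + 1 := by rwa [F.rank_eq, F.rank_eq] at hs
    obtain ⟨⟨⟨t, e⟩, g⟩, hg⟩ := (h p q hq).2 f
    have ht : A.rank t = A.rank p + 1 := by rw [← F.rank_eq, e, F.rank_eq, hq]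
    exact ⟨⟨⟨t, g⟩, ht⟩, Subtype.ext ((sigma_mk_eq_iff_cast _ _).mpr ⟨e, hg⟩)⟩
  · rintro ⟨⟨t₁, e₁⟩, g₁⟩ ⟨⟨t₂, e₂⟩, g₂⟩ he
    have ht : ∀ {t}, F.obj t = F.obj q → A.rank t = A.rank p + 1 := fun e => by
      rw [← F.rank_eq, e, F.rank_eq, hq]
    have := (h p).1 (a₁ := ⟨⟨t₁, g₁⟩, ht e₁⟩) (a₂ := ⟨⟨t₂, g₂⟩, ht e₂⟩) <| Subtype.ext <|
      (sigma_mk_cast e₁ _).symm.trans ((congrArg (Sigma.mk _) he).trans (sigma_mk_cast e₂ _))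
    cases this
    rfl
  · intro f
    obtain ⟨⟨⟨t, g⟩, _⟩, hg⟩ := (h p).2 ⟨⟨F.obj q, f⟩, by rw [F.rank_eq, F.rank_eq, hq]⟩
    obtain ⟨e, he⟩ := (sigma_mk_eq_iff_cast _ _).mp (congrArg Subtype.val hg)
    exact ⟨⟨⟨t, e⟩, g⟩, he⟩

theorem IsCovering.comp {F : Mor A B} {G : Mor B D} (hF : F.IsCovering) (hG : G.IsCovering) :
    (F.comp G).IsCovering := by
  rw [isCovering_iff] at *
  exact ⟨hG.1.comp hF.1, fun p => (hG.2 (F.obj p)).comp (hF.2 p)⟩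

theorem isCovering_of_thin (F : Mor A B) [∀ p q, Subsingleton (A.Hom p q)]
    [∀ p q, Subsingleton (B.Hom p q)] (hF : Function.Bijective F.obj)
    (hreflect : ∀ p q, B.Hom (F.obj p) (F.obj q) → A.Hom p q) : F.IsCovering := by
  refine (isCovering_iff F).mpr ⟨hF.2, fun p => ⟨?_, ?_⟩⟩
  · rintro ⟨⟨t₁, g₁⟩, h₁⟩ ⟨⟨t₂, g₂⟩, h₂⟩ he
    obtain rfl : t₁ = t₂ := hF.1 (congrArg (fun g => g.1.1) he)
    rw [Subsingleton.elim g₁ g₂]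
  · rintro ⟨⟨s, g⟩, hs⟩
    obtain ⟨t, rfl⟩ := hF.2 s
    refine ⟨⟨⟨t, hreflect p t g⟩, by rwa [F.rank_eq, F.rank_eq] at hs⟩, ?_⟩
    exact Subtype.ext (Sigma.ext rfl (heq_of_eq (Subsingleton.elim _ _)))

end Mor

theorem Chain.rank_eq {C : UDData} :
    ∀ {n : ℕ} {p q : C.Obj}, C.Chain n p q → C.rank q = C.rank p + n
  | 0, _, _, ⟨h⟩ => h ▸ rfl
  | _ + 1, _, _, ⟨_, c, _, hf⟩ => by rw [hf, Chain.rank_eq c]; rfl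

/-- A string `(f₁, …, fₙ)` from `0̂`, ending at `tip`. -/
structure Str (C : UDData) where
  len : ℕ
  tip : C.Obj
  chain : C.Chain len C.zhat tip

namespace Str

variable {C : UDData}

def nil : C.Str := ⟨0, C.zhat, ⟨rfl⟩⟩

def snoc (x : C.Str) (s : C.StepsFrom x.tip) : C.Str :=
  ⟨x.len + 1, s.1.1, ⟨x.tip, x.chain, s.1.2, s.2⟩⟩

-- `nil` is its own parent, and its `lastStep` is the identity.
def parent : C.Str → C.Str
  | ⟨0, q, c⟩ => ⟨0, q, c⟩
  | ⟨n + 1, _, ⟨r, c, _⟩⟩ => ⟨n, r, c⟩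

def lastStep : (x : C.Str) → C.Hom x.parent.tip x.tip
  | ⟨0, q, _⟩ => C.idm q
  | ⟨_ + 1, _, ⟨_, _, f, _⟩⟩ => f

/-- For `x = (f₁, …, fₙ)` and `k ≤ n`, this is `fₙ ∘ ⋯ ∘ fₙ₋ₖ₊₁`. -/
def lastComp : (k : ℕ) → (x : C.Str) → C.Hom (parent^[k] x).tip x.tip
  | 0, x => C.idm x.tip
  | k + 1, x => C.comp (lastComp k x.parent) x.lastStep

theorem rank_tip (hz : C.rank C.zhat = 0) (x : C.Str) : C.rank x.tip = x.len := by
  rw [x.chain.rank_eq, hz, Nat.zero_add]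

theorem len_parent (x : C.Str) : x.parent.len = x.len - 1 := by
  obtain ⟨_ | n, q, c⟩ := x <;> rfl

theorem len_parent_iterate (k : ℕ) (x : C.Str) : (parent^[k] x).len = x.len - k := by
  induction k generalizing x with
  | zero => rfl
  | succ k ih => rw [Function.iterate_succ_apply, ih, len_parent]; omega

theorem eq_nil_of_len_eq_zero {x : C.Str} (h : x.len = 0) : x = nil := by
  obtain ⟨n, q, c⟩ := x
  subst h
  obtain ⟨rfl⟩ := c
  rfl

instance : PartialOrder C.Str where
  le x y := x.len ≤ y.len ∧ parent^[y.len - x.len] y = x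
  le_refl x := ⟨le_rfl, by rw [Nat.sub_self]; rfl⟩
  le_trans x y z hxy hyz := ⟨hxy.1.trans hyz.1, by
    rw [show z.len - x.len = (y.len - x.len) + (z.len - y.len) by omega,
      Function.iterate_add_apply, hyz.2, hxy.2]⟩
  le_antisymm x y hxy hyx := by
    obtain ⟨hl, h⟩ := hxy
    rwa [show y.len - x.len = 0 by omega, eq_comm] at h

theorem eq_of_le_of_len_eq {x y : C.Str} (h : x ≤ y) (hl : x.len = y.len) : x = y := by
  have h := h.2
  rwa [hl, Nat.sub_self, eq_comm] at h

theorem eq_parent_of_le {r y : C.Str} (h : r ≤ y) (hl : y.len = r.len + 1) : r = y.parent := by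
  rw [← h.2, show y.len - r.len = 1 by omega]; rfl

theorem parent_iterate_le {k : ℕ} {y : C.Str} (hk : k ≤ y.len) : parent^[k] y ≤ y := by
  refine ⟨by rw [len_parent_iterate]; omega, ?_⟩
  rw [len_parent_iterate, show y.len - (y.len - k) = k by omega]

theorem nil_le (x : C.Str) : nil ≤ x :=
  ⟨Nat.zero_le _, eq_nil_of_len_eq_zero <| by
    rw [len_parent_iterate]
    exact Nat.sub_sub_self (Nat.zero_le _)⟩

theorem le_snoc (x : C.Str) (s : C.StepsFrom x.tip) : x ≤ x.snoc s :=
  ⟨Nat.le_succ _, by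
    rw [show (x.snoc s).len - x.len = 1 from Nat.add_sub_cancel_left x.len 1]
    rfl⟩

theorem exists_len_eq_of_le {x y : C.Str} (h : x ≤ y) (hlt : x.len < y.len) :
    ∃ r, x ≤ r ∧ r ≤ y ∧ r.len = x.len + 1 := by
  have hr : (parent^[y.len - (x.len + 1)] y).len = x.len + 1 := by
    rw [len_parent_iterate]; omega
  refine ⟨_, ⟨by omega, ?_⟩, parent_iterate_le (Nat.sub_le _ _), hr⟩
  rw [hr, Nat.add_sub_cancel_left, ← Function.iterate_add_apply,
    show 1 + (y.len - (x.len + 1)) = y.len - x.len by omega, h.2]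

theorem arrow_lastComp_add (k l : ℕ) (z : C.Str) :
    arrow (z.lastComp (k + l)) = arrow (C.comp ((parent^[l] z).lastComp k) (z.lastComp l)) := by
  induction l generalizing z with
  | zero => exact congrArg arrow (C.comp_idm _).symm
  | succ l ih =>
    calc arrow (C.comp (z.parent.lastComp (k + l)) z.lastStep)
        = arrow (C.comp (C.comp ((parent^[l] z.parent).lastComp k) (z.parent.lastComp l))
            z.lastStep) := arrow_comp (ih z.parent) rfl
      _ = _ := by rw [C.comp_assoc]; rfl

theorem arrow_lastComp_one_snoc (x : C.Str) (s : C.StepsFrom x.tip) :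
    arrow ((x.snoc s).lastComp 1) = arrow s.1.2 :=
  congrArg arrow (C.idm_comp s.1.2)

end Str

section UnivCover

variable {C : UDData}

def chainSuccEquiv (p : C.Obj) (n : ℕ) :
    (Σ q, C.Chain (n + 1) p q) ≃ Σ x : (Σ r, C.Chain n p r), C.StepsFrom x.1 where
  toFun := fun ⟨q, r, c, f, hf⟩ => ⟨⟨r, c⟩, ⟨⟨q, f⟩, hf⟩⟩
  invFun := fun ⟨⟨r, c⟩, ⟨⟨q, f⟩, hf⟩⟩ => ⟨q, r, c, f, hf⟩
  left_inv := fun ⟨_, _, _, _, _⟩ => rfl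
  right_inv := fun ⟨⟨_, _⟩, ⟨⟨_, _⟩, _⟩⟩ => rfl

theorem IsUpdown.finite_stepsFrom (hC : C.IsUpdown) (p : C.Obj) : Finite (C.StepsFrom p) := by
  have := (hC.rank_finite (C.rank p + 1)).to_subtype
  have := hC.hom_finite p
  refine Finite.of_injective (fun g : C.StepsFrom p =>
    (⟨⟨g.1.1, g.2⟩, g.1.2⟩ : Σ q : {q | C.rank q = C.rank p + 1}, C.Hom p q)) ?_
  rintro ⟨⟨_, _⟩, _⟩ ⟨⟨_, _⟩, _⟩ h
  cases h
  rfl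

instance (p : C.Obj) : Subsingleton (Σ q, C.Chain 0 p q) :=
  ⟨by rintro ⟨_, ⟨rfl⟩⟩ ⟨_, ⟨rfl⟩⟩; rfl⟩

theorem IsUpdown.finite_chain (hC : C.IsUpdown) (p : C.Obj) :
    ∀ n, Finite (Σ q, C.Chain n p q)
  | 0 => Finite.of_subsingleton
  | n + 1 =>
    have := hC.finite_chain p n
    have := hC.finite_stepsFrom
    Finite.of_equiv _ (chainSuccEquiv p n).symm

def Str.equivSigma : C.Str ≃ Σ n, Σ q, C.Chain n C.zhat q where
  toFun x := ⟨x.len, x.tip, x.chain⟩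
  invFun y := ⟨y.1, y.2.1, y.2.2⟩
  left_inv _ := rfl
  right_inv _ := rfl

def Str.lenEquiv (n : ℕ) : {x : C.Str // x.len = n} ≃ Σ q, C.Chain n C.zhat q :=
  (Str.equivSigma.subtypeEquiv fun _ => Iff.rfl).trans (Equiv.sigmaSubtype n)

def univCover (C : UDData) : UDData where
  Obj := C.Str
  Hom x y := PLift (x ≤ y)
  idm _ := ⟨le_rfl⟩
  comp f g := ⟨f.down.trans g.down⟩
  idm_comp _ := rfl
  comp_idm _ := rfl
  comp_assoc _ _ _ := rfl
  rank := Str.len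
  zhat := Str.nil

instance (x y : C.univCover.Obj) : Subsingleton (C.univCover.Hom x y) :=
  inferInstanceAs (Subsingleton (PLift _))

theorem univCover_univalent : C.univCover.Univalent := fun _ => inferInstance

theorem subsingleton_univCover_chain :
    ∀ (n : ℕ) (x y : C.univCover.Obj), Subsingleton (C.univCover.Chain n x y)
  | 0, _, _ => ⟨fun ⟨_⟩ ⟨_⟩ => rfl⟩
  | n + 1, x, y => ⟨by
    rintro ⟨r, c, ⟨h⟩, hr⟩ ⟨r', c', ⟨h'⟩, hr'⟩
    obtain rfl := (Str.eq_parent_of_le h hr).trans (Str.eq_parent_of_le h' hr').symm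
    obtain rfl := (subsingleton_univCover_chain n x r).elim c c'
    rfl⟩

theorem univCover_simple : C.univCover.Simple :=
  ⟨fun _ _ => inferInstance, subsingleton_univCover_chain⟩

theorem card_univCover_rank_eq (n : ℕ) :
    Nat.card {x : C.univCover.Obj // C.univCover.rank x = n} = C.coverCard n :=
  Nat.card_congr (Str.lenEquiv n)

theorem univCover_isUpdown (hC : C.IsUpdown) : C.univCover.IsUpdown where
  rank_finite n := by
    have := hC.finite_chain C.zhat n
    exact Set.finite_coe_iff.mp (Finite.of_equiv _ (Str.lenEquiv n).symm)
  hom_finite _ _ := Finite.of_subsingleton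
  rank_zhat := rfl
  zhat_unique _ := Str.eq_nil_of_len_eq_zero
  from_zhat x := ⟨⟨Str.nil_le x⟩⟩
  hom_rank _ _ := fun ⟨⟨h⟩⟩ => h.1.lt_or_eq.imp_right (Str.eq_of_le_of_len_eq h)
  aut_inv _ f := ⟨f, rfl, rfl⟩
  factor := fun ⟨h⟩ hlt =>
    let ⟨r, hxr, hry, hr⟩ := Str.exists_len_eq_of_le h hlt
    ⟨r, ⟨hxr⟩, ⟨hry⟩, hr, rfl⟩
  pre_free _ _ _ _ := rfl
  post_free _ _ _ _ := rfl

def univCoverProj (C : UDData) (hz : C.rank C.zhat = 0) : Mor C.univCover C where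
  obj x := x.tip
  map {x y} h := castSrc (congrArg Str.tip h.down.2) (y.lastComp (y.len - x.len))
  map_idm x := arrow_injective <| (arrow_castSrc _ _).trans <| by rw [Nat.sub_self]; rfl
  map_comp {x y z} f g := arrow_injective <| by
    have := f.down.1
    have := g.down.1
    calc arrow (castSrc _ (z.lastComp (z.len - x.len)))
        = arrow (z.lastComp ((y.len - x.len) + (z.len - y.len))) := by
          rw [arrow_castSrc, show z.len - x.len = (y.len - x.len) + (z.len - y.len) by omega]
      _ = arrow (C.comp ((Str.parent^[z.len - y.len] z).lastComp (y.len - x.len))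
            (z.lastComp (z.len - y.len))) := Str.arrow_lastComp_add _ _ _
      _ = _ := arrow_comp (by rw [arrow_castSrc, g.down.2]) (arrow_castSrc _ _).symm
  rank_eq := Str.rank_tip hz

theorem IsUpdown.exists_step_into (hC : C.IsUpdown) : ∀ (k : ℕ) {p q : C.Obj}, C.Hom p q →
    C.rank q = C.rank p + k + 1 → ∃ r, Nonempty (C.Hom r q) ∧ C.rank q = C.rank r + 1
  | 0, p, _, f, hq => ⟨p, ⟨f⟩, hq⟩
  | k + 1, _, _, f, hq => by
    obtain ⟨r, -, h, hr, -⟩ := hC.factor f (by omega)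
    exact hC.exists_step_into k h (by omega)

theorem Str.exists_tip_eq (hC : C.IsUpdown) (p : C.Obj) : ∃ x : C.Str, x.tip = p := by
  induction h : C.rank p generalizing p with
  | zero => exact ⟨nil, (hC.zhat_unique p h).symm⟩
  | succ n ih =>
    obtain ⟨f⟩ := hC.from_zhat p
    obtain ⟨r, ⟨g⟩, hr⟩ := hC.exists_step_into n f (by rw [h, hC.rank_zhat]; omega)
    obtain ⟨x, rfl⟩ := ih r (by omega)
    exact ⟨x.snoc ⟨⟨p, g⟩, hr⟩, rfl⟩

def Str.snocStep (x : C.Str) (s : C.StepsFrom x.tip) : C.univCover.StepsFrom x :=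
  ⟨⟨x.snoc s, ⟨x.le_snoc s⟩⟩, rfl⟩

theorem Str.snocStep_surjective (x : C.Str) : Function.Surjective x.snocStep := by
  rintro ⟨⟨⟨m, q, c⟩, ⟨h⟩⟩, hm⟩
  obtain ⟨n, p, b⟩ := x
  change m = n + 1 at hm
  subst hm
  obtain ⟨r, c, f, hf⟩ := c
  have h := h.2
  rw [Nat.add_sub_cancel_left] at h
  change (⟨n, r, c⟩ : C.Str) = ⟨n, p, b⟩ at h
  cases h
  exact ⟨⟨⟨q, f⟩, hf⟩, rfl⟩

theorem stepMap_univCoverProj_snocStep (hz : C.rank C.zhat = 0) (x : C.Str)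
    (s : C.StepsFrom x.tip) : (univCoverProj C hz).stepMap x (x.snocStep s) = s := by
  refine Subtype.ext <| Sigma.ext rfl <| heq_of_eq <| arrow_injective <|
    (arrow_castSrc _ _).trans ?_
  change arrow ((x.snoc s).lastComp (x.len + 1 - x.len)) = _
  rw [Nat.add_sub_cancel_left]
  exact Str.arrow_lastComp_one_snoc x s

theorem isCovering_univCoverProj (hC : C.IsUpdown) :
    (univCoverProj C hC.rank_zhat).IsCovering := by
  refine (Mor.isCovering_iff _).mpr ⟨Str.exists_tip_eq hC, fun x => ?_⟩
  have hinv : Function.LeftInverse ((univCoverProj C hC.rank_zhat).stepMap x) x.snocStep :=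
    stepMap_univCoverProj_snocStep _ x
  exact ⟨Function.LeftInverse.injective (hinv.rightInverse_of_surjective x.snocStep_surjective),
    hinv.surjective⟩

section Lift

variable {C' : UDData} (φ : Mor C' C) (hz : φ.obj C'.zhat = C.zhat)

def Mor.mapChain : ∀ {n : ℕ} {q : C'.Obj}, C'.Chain n C'.zhat q → C.Chain n C.zhat (φ.obj q)
  | 0, _, c => ⟨hz.symm.trans (congrArg φ.obj c.down)⟩
  | _ + 1, _, ⟨r, c, f, hf⟩ =>
    ⟨φ.obj r, Mor.mapChain c, φ.map f, by rw [φ.rank_eq, φ.rank_eq, hf]⟩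

def Mor.mapChains (n : ℕ) (x : Σ q, C'.Chain n C'.zhat q) : Σ q, C.Chain n C.zhat q :=
  ⟨φ.obj x.1, φ.mapChain hz x.2⟩

def Str.map (x : C'.Str) : C.Str := ⟨x.len, φ.obj x.tip, φ.mapChain hz x.chain⟩

theorem Mor.bijective_mapChains (hφ : φ.IsCovering) (n : ℕ) :
    Function.Bijective (φ.mapChains hz n) := by
  induction n with
  | zero =>
    exact ⟨fun _ _ _ => Subsingleton.elim _ _,
      fun _ => ⟨⟨C'.zhat, ⟨rfl⟩⟩, Subsingleton.elim _ _⟩⟩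
  | succ n ih =>
    have hstep := ((Mor.isCovering_iff φ).mp hφ).2
    have hsplit : φ.mapChains hz (n + 1) = (chainSuccEquiv C.zhat n).symm ∘
        Sigma.map (φ.mapChains hz n) (fun x => φ.stepMap x.1) ∘ chainSuccEquiv C'.zhat n := by
      funext ⟨_, _, _, _, _⟩
      rfl
    rw [hsplit]
    exact (chainSuccEquiv _ n).symm.bijective.comp <|
      Function.Bijective.comp ⟨ih.1.sigma_map fun x => (hstep x.1).1,
        ih.2.sigma_map fun x => (hstep x.1).2⟩ (chainSuccEquiv _ n).bijective

namespace Str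

theorem map_parent (x : C'.Str) : (x.map φ hz).parent = x.parent.map φ hz := by
  obtain ⟨_ | n, q, r, c, f, hf⟩ := x <;> rfl

theorem map_parent_iterate (k : ℕ) (x : C'.Str) :
    parent^[k] (x.map φ hz) = (parent^[k] x).map φ hz := by
  induction k generalizing x with
  | zero => rfl
  | succ k ih => rw [Function.iterate_succ_apply, Function.iterate_succ_apply, map_parent, ih]

theorem map_le_map {x y : C'.Str} (h : x ≤ y) : x.map φ hz ≤ y.map φ hz :=
  ⟨h.1, (map_parent_iterate φ hz _ y).trans (congrArg _ h.2)⟩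

theorem map_le_map_iff (hinj : Function.Injective (Str.map φ hz)) {x y : C'.Str} :
    x.map φ hz ≤ y.map φ hz ↔ x ≤ y :=
  ⟨fun h => ⟨h.1, hinj ((map_parent_iterate φ hz _ y).symm.trans h.2)⟩, map_le_map φ hz⟩

theorem arrow_map_lastStep (x : C'.Str) :
    arrow (φ.map x.lastStep) = arrow (x.map φ hz).lastStep := by
  obtain ⟨_ | n, q, r, c, f, hf⟩ := x
  · exact congrArg arrow (φ.map_idm _)
  · rfl

theorem arrow_map_lastComp (k : ℕ) (x : C'.Str) :
    arrow (φ.map (x.lastComp k)) = arrow ((x.map φ hz).lastComp k) := by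
  induction k generalizing x with
  | zero => exact congrArg arrow (φ.map_idm _)
  | succ k ih =>
    change arrow (φ.map (C'.comp (x.parent.lastComp k) x.lastStep)) =
      arrow (C.comp ((x.map φ hz).parent.lastComp k) (x.map φ hz).lastStep)
    rw [φ.map_comp]
    refine arrow_comp ((ih x.parent).trans ?_) (x.arrow_map_lastStep φ hz)
    rw [← map_parent]

theorem map_bijective (hφ : φ.IsCovering) : Function.Bijective (Str.map φ hz) := by
  have hsplit : Str.map φ hz = equivSigma.symm ∘ Sigma.map id (φ.mapChains hz) ∘ equivSigma :=
    rfl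
  rw [hsplit]
  exact equivSigma.symm.bijective.comp <| Function.Bijective.comp
    ⟨Function.injective_id.sigma_map fun n => (Mor.bijective_mapChains φ hz hφ n).1,
      Function.surjective_id.sigma_map fun n => (Mor.bijective_mapChains φ hz hφ n).2⟩
    equivSigma.bijective

noncomputable def mapEquiv (hφ : φ.IsCovering) : C'.Str ≃ C.Str :=
  Equiv.ofBijective _ (map_bijective φ hz hφ)

theorem map_mapEquiv_symm (hφ : φ.IsCovering) (x : C.Str) :
    ((mapEquiv φ hz hφ).symm x).map φ hz = x :=
  (mapEquiv φ hz hφ).apply_symm_apply x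

end Str

def univCoverMap : Mor C'.univCover C.univCover where
  obj := Str.map φ hz
  map h := ⟨Str.map_le_map φ hz h.down⟩
  map_idm _ := rfl
  map_comp _ _ := rfl
  rank_eq _ := rfl

theorem univCoverProj_comp (h₀' : C'.rank C'.zhat = 0) (h₀ : C.rank C.zhat = 0) :
    (univCoverProj C' h₀').comp φ = (univCoverMap φ hz).comp (univCoverProj C h₀) :=
  Mor.ext_of_arrow (fun _ => rfl) fun {x y} _ =>
    calc arrow (φ.map (castSrc _ (y.lastComp (y.len - x.len))))
        = arrow (φ.map (y.lastComp (y.len - x.len))) := φ.arrow_map (arrow_castSrc _ _)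
      _ = arrow ((y.map φ hz).lastComp (y.len - x.len)) := Str.arrow_map_lastComp φ hz _ y
      _ = _ := (arrow_castSrc _ _).symm

noncomputable def univCoverLift (hφ : φ.IsCovering) : Mor C.univCover C'.univCover where
  obj := (Str.mapEquiv φ hz hφ).symm
  map {x y} h := ⟨(Str.map_le_map_iff φ hz (Str.map_bijective φ hz hφ).1).mp <|
    (Str.map_mapEquiv_symm φ hz hφ x).trans_le
      (h.down.trans_eq (Str.map_mapEquiv_symm φ hz hφ y).symm)⟩
  map_idm _ := rfl
  map_comp _ _ := rfl
  rank_eq x := congrArg Str.len (Str.map_mapEquiv_symm φ hz hφ x)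

theorem univCoverLift_comp_univCoverMap (hφ : φ.IsCovering) :
    (univCoverLift φ hz hφ).comp (univCoverMap φ hz) = Mor.id _ :=
  Mor.ext_of_arrow (Str.map_mapEquiv_symm φ hz hφ) fun _ =>
    arrow_eq_of_subsingleton (Str.map_mapEquiv_symm φ hz hφ _)
      (Str.map_mapEquiv_symm φ hz hφ _) _ _

theorem isCovering_univCoverLift (hφ : φ.IsCovering) : (univCoverLift φ hz hφ).IsCovering :=
  Mor.isCovering_of_thin _ (Str.mapEquiv φ hz hφ).symm.bijective fun x y h =>
    ⟨(Str.map_mapEquiv_symm φ hz hφ x).symm.trans_le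
      ((Str.map_le_map φ hz h.down).trans_eq (Str.map_mapEquiv_symm φ hz hφ y))⟩

end Lift

end UnivCover

end UDData

theorem univalent_has_universal_cover_general (C : UDData) (hC : C.IsUpdown) :
    ∃ (Ct : UDData) (π : UDData.Mor Ct C),
      Ct.IsUpdown ∧ Ct.Univalent ∧ Ct.Simple ∧
      (∀ n : ℕ, Nat.card {x : Ct.Obj // Ct.rank x = n} = C.coverCard n) ∧
      π.IsCovering ∧
      ∀ (C' : UDData) (φ : UDData.Mor C' C), C'.IsUpdown → C'.Univalent → φ.IsCovering →
        ∃ ψ : UDData.Mor Ct C', ψ.IsCovering ∧ ψ.comp φ = π := by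
  open UDData in
  refine ⟨C.univCover, univCoverProj C hC.rank_zhat, univCover_isUpdown hC, univCover_univalent,
    univCover_simple, card_univCover_rank_eq, isCovering_univCoverProj hC, ?_⟩
  intro C' φ hC' _ hφ
  have hz : φ.obj C'.zhat = C.zhat := hC.zhat_unique _ (by rw [φ.rank_eq, hC'.rank_zhat])
  refine ⟨(univCoverLift φ hz hφ).comp (univCoverProj C' hC'.rank_zhat),
    (isCovering_univCoverLift φ hz hφ).comp (isCovering_univCoverProj hC'), ?_⟩
  rw [Mor.comp_assoc, univCoverProj_comp φ hz, ← Mor.comp_assoc,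
    univCoverLift_comp_univCoverMap, Mor.id_comp]

theorem univalent_has_universal_cover (C : UDData) (hC : C.IsUpdown) (hU : C.Univalent) :
    ∃ (Ct : UDData) (π : UDData.Mor Ct C),
      Ct.IsUpdown ∧ Ct.Univalent ∧ Ct.Simple ∧
      (∀ n : ℕ, Nat.card {x : Ct.Obj // Ct.rank x = n} = C.coverCard n) ∧
      π.IsCovering ∧
      ∀ (C' : UDData) (φ : UDData.Mor C' C), C'.IsUpdown → C'.Univalent → φ.IsCovering →
        ∃ ψ : UDData.Mor Ct C', ψ.IsCovering ∧ ψ.comp φ = π :=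
  univalent_has_universal_cover_general C hC
end

section
/- For the updown category of necklaces with c colors, the object generating function is O(t) = 1 − log(1 − ct) and the morphism generating function is M(t) = ct/(1 − ct²). -/
/-- The rotation (orbit) relation on colorings of `ZMod m` by `c` colors:
`g` is a rotation of `f`. -/
def NeckRel (c m : ℕ) : (ZMod m → Fin c) → (ZMod m → Fin c) → Prop :=
  fun f g => ∃ k : ZMod m, ∀ i, g i = f (i + k)

/-- Necklaces with `m` beads in `c` colors. -/
def Neck (c m : ℕ) := Quot (NeckRel c m)

/-- The order of the automorphism group (rotational stabilizer) of a coloring. -/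
noncomputable def neckStab {c m : ℕ} (f : ZMod m → Fin c) : ℕ :=
  Nat.card {k : ZMod m // ∀ i, f (i + k) = f i}

/-- The coefficients of the object generating function of the updown category of
necklaces: `a_m = Σ_{necklaces with m beads} 1/|Aut|` (with `a_0 = 1`, the empty
necklace having trivial automorphism group). -/
noncomputable def neckCoeff (c : ℕ) : ℕ → ℚ :=
  fun m => if m = 0 then 1 else ∑ᶠ ω : Neck c m, ((neckStab (Quot.out ω) : ℚ))⁻¹

/-- The object generating function of the updown category of necklaces. -/
noncomputable def neckO (c : ℕ) : PowerSeries ℚ := PowerSeries.mk (neckCoeff c)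

/-- The morphism generating function of the updown category of necklaces:
since the category is factorial (evenly down-covered with `d_m = m`),
`M(t) = Σ_{m ≥ 1} a_m · m · t^(2m-1)`. -/
noncomputable def neckM (c : ℕ) : PowerSeries ℚ :=
  PowerSeries.mk fun n =>
    if n % 2 = 1 then neckCoeff c ((n + 1) / 2) * (((n + 1) / 2 : ℕ) : ℚ) else 0


/-!
By orbit–stabilizer, `1 / |Stab f| = |orbit f| / m` for a coloring `f` of `ZMod m`, so summing
over necklaces counts every one of the `c ^ m` colorings once, with weight `1 / m`; hence
`a_m = c ^ m / m`. Then `m · a_m = c ^ m`, so the coefficients of `M` vanish in even degree and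
satisfy `[t^(n+2)] M = c · [t^n] M` with `[t^1] M = c`, which is `(1 - c t²) M = c t`.
-/

open AddAction

theorem AddAction.inv_card_stabilizer {K G X : Type*} [Field K] [CharZero K] [AddGroup G]
    [AddAction G X] [Finite G] (x : X) :
    ((Nat.card (stabilizer G x) : K))⁻¹ = Nat.card (orbit G x) / Nat.card G := by
  have card_mul := (stabilizer G x).card_mul_index
  rw [index_stabilizer, ← Nat.card_coe_set_eq] at card_mul
  have : Nonempty (orbit G x) := (nonempty_orbit x).to_subtype
  have : Finite (orbit G x) := Set.finite_range (· +ᵥ x)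
  have horbit : (Nat.card (orbit G x) : K) ≠ 0 := Nat.cast_ne_zero.mpr Nat.card_pos.ne'
  rw [← card_mul, Nat.cast_mul, div_mul_cancel_right₀ horbit]

theorem AddAction.finsum_inv_card_stabilizer_out {K G X : Type*} [Field K] [CharZero K]
    [AddGroup G] [AddAction G X] [Finite G] [Finite X] :
    ∑ᶠ ω : orbitRel.Quotient G X, ((Nat.card (stabilizer G ω.out) : K))⁻¹ =
      Nat.card X / Nat.card G := by
  have := Fintype.ofFinite (orbitRel.Quotient G X)
  simp only [finsum_eq_sum_of_fintype, inv_card_stabilizer]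
  rw [← Finset.sum_div, ← Nat.cast_sum, ← Nat.card_sigma,
    Nat.card_congr (selfEquivSigmaOrbits G X).symm]

theorem neckRel_eq_orbitRel (c m : ℕ) :
    NeckRel c m = (orbitRel (DomAddAct (ZMod m)) (ZMod m → Fin c)).r := by
  ext f g
  simp only [NeckRel, orbitRel_apply, mem_orbit_iff, funext_iff, DomAddAct.vadd_apply,
    vadd_eq_add]
  constructor
  · rintro ⟨k, hk⟩
    exact ⟨DomAddAct.mk (-k), fun i ↦ by simp [hk]⟩
  · rintro ⟨k, hk⟩
    exact ⟨-DomAddAct.mk.symm k, fun i ↦ by simp [← hk]⟩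

theorem neckStab_eq_card_stabilizer {c m : ℕ} (f : ZMod m → Fin c) :
    neckStab f = Nat.card (stabilizer (DomAddAct (ZMod m)) f) := by
  refine Nat.card_congr (DomAddAct.mk.subtypeEquiv fun k ↦ ?_)
  simp [funext_iff, DomAddAct.vadd_apply, add_comm]

theorem neckCoeff_of_ne_zero (c : ℕ) {m : ℕ} (hm : m ≠ 0) :
    neckCoeff c m = (c : ℚ) ^ m / m := by
  have : NeZero m := ⟨hm⟩
  have : Finite (DomAddAct (ZMod m)) := Finite.of_equiv _ DomAddAct.mk
  rw [neckCoeff, if_neg hm]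
  unfold Neck
  rw [neckRel_eq_orbitRel]
  simp only [neckStab_eq_card_stabilizer]
  refine (finsum_inv_card_stabilizer_out (G := DomAddAct (ZMod m))).trans ?_
  rw [Nat.card_fun, Nat.card_congr DomAddAct.mk.symm]
  simp

theorem PowerSeries.one_sub_C_mul_X_sq_mul_of_coeff_add_two {R : Type*} [Ring R]
    (f : PowerSeries R) (b : R) (h : ∀ n, coeff (n + 2) f = b * coeff n f) :
    (1 - C b * X ^ 2) * f = C (coeff 0 f) + C (coeff 1 f) * X := by
  ext n
  rw [sub_mul, one_mul, mul_assoc, map_sub, coeff_C_mul, coeff_X_pow_mul', map_add, coeff_C,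
    coeff_C_mul, coeff_X]
  rcases n with _ | _ | n <;> simp [h]

theorem coeff_neckM (c n : ℕ) :
    PowerSeries.coeff n (neckM c) = if n % 2 = 1 then (c : ℚ) ^ ((n + 1) / 2) else 0 := by
  rw [neckM, PowerSeries.coeff_mk]
  split_ifs with hn
  · have hk : (n + 1) / 2 ≠ 0 := by omega
    rw [neckCoeff_of_ne_zero c hk, div_mul_cancel₀ _ (Nat.cast_ne_zero.mpr hk)]
  · rfl

theorem coeff_add_two_neckM (c n : ℕ) :
    PowerSeries.coeff (n + 2) (neckM c) = c * PowerSeries.coeff n (neckM c) := by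
  simp only [coeff_neckM, Nat.add_mod_right, show (n + 2 + 1) / 2 = (n + 1) / 2 + 1 by omega]
  split_ifs <;> ring

/-- For the updown category of necklaces with `c` colors, the object generating
function is `O(t) = 1 − log(1 − ct)`, i.e. has coefficients `1, c, c²/2, c³/3, …`,
and the morphism generating function is `M(t) = ct/(1 − ct²)`. -/
theorem necklace_generating_functions (c : ℕ) :
    (∀ n : ℕ, PowerSeries.coeff n (neckO c) =
      if n = 0 then 1 else (c : ℚ) ^ n / (n : ℚ)) ∧
    (1 - PowerSeries.C (c : ℚ) * PowerSeries.X ^ 2) * neckM c =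
      PowerSeries.C (c : ℚ) * PowerSeries.X := by
  refine ⟨fun n ↦ ?_, ?_⟩
  · rw [neckO, PowerSeries.coeff_mk]
    split_ifs with hn
    · simp [neckCoeff, hn]
    · exact neckCoeff_of_ne_zero c hn
  · rw [PowerSeries.one_sub_C_mul_X_sq_mul_of_coeff_add_two _ _ (coeff_add_two_neckM c),
      coeff_neckM, coeff_neckM]
    simp
end
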